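/- arXiv:1103.4884 — 6 statements merged into one kernel-verified Lean document; each statement's English description precedes it below -/
import Mathlib

section
/- A binary m×n matrix M is a lonesum matrix if and only if no 2×2 submatrix of M (obtained by choosing two rows i1 < i2 and two columns j1 < j2) equals (1 0; 0 1) or (0 1; 1 0). -/
/-!
A forbidden `2×2` submatrix can be replaced by the other one without changing any row or column
sum. Conversely, if there is none, the supports of the rows are nested in the order of their row
sums, so `M i j = 1` exactly when the number `g i` of rows whose sum is at least that of row `i`
is at most the column sum `c j`. The weights `2 c j + 1 - 2 g i` are then positive on the ones of
`M` and negative on its zeros, so `M` maximizes the total weight entrywise among binary matrices;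
but the total weight of a matrix only depends on its margins, so any `N` with the margins of `M`
must equal `M`.
-/

/-- A `q`-ary `m×n` matrix `M` is a lonesum matrix if it is uniquely determined
by its row and column sums. -/
def IsLonesum {q m n : ℕ} (M : Fin m → Fin n → Fin q) : Prop :=
  ∀ N : Fin m → Fin n → Fin q,
    (∀ i, ∑ j, (N i j : ℕ) = ∑ j, (M i j : ℕ)) →
    (∀ j, ∑ i, (N i j : ℕ) = ∑ i, (M i j : ℕ)) →
    N = M

open Finset

theorem Fintype.sum_eq_sum_of_eq_off_pair {ι β : Type*} [Fintype ι] [DecidableEq ι]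
    [AddCommMonoid β] {f g : ι → β} {a b : ι} (hab : a ≠ b) (hpair : f a + f b = g a + g b)
    (hoff : ∀ x, x ≠ a → x ≠ b → f x = g x) : ∑ x, f x = ∑ x, g x := by
  rw [← sum_add_sum_compl {a, b} f, ← sum_add_sum_compl {a, b} g, sum_pair hab, sum_pair hab,
    hpair]
  refine congrArg _ (Finset.sum_congr rfl fun x hx => ?_)
  simp only [mem_compl, mem_insert, mem_singleton, not_or] at hx
  exact hoff x hx.1 hx.2

theorem not_isLonesum_of_swap {q m n : ℕ} (M : Fin m → Fin n → Fin q) {i₁ i₂ : Fin m}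
    {j₁ j₂ : Fin n} (hi : i₁ ≠ i₂) (hcol : (M i₁ j₁ : ℕ) + M i₂ j₁ = M i₁ j₂ + M i₂ j₂)
    (hne : M i₁ j₁ ≠ M i₁ j₂) : ¬ IsLonesum M := by
  intro hM
  -- exchange columns `j₁` and `j₂` inside rows `i₁` and `i₂`
  set N : Fin m → Fin n → Fin q := fun i j =>
    if i = i₁ ∨ i = i₂ then M i (Equiv.swap j₁ j₂ j) else M i j
  have hrow : ∀ i, ∑ j, (N i j : ℕ) = ∑ j, (M i j : ℕ) := by
    intro i
    by_cases h : i = i₁ ∨ i = i₂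
    · simp only [N, if_pos h]
      exact Equiv.sum_comp (Equiv.swap j₁ j₂) fun j => (M i j : ℕ)
    · simp [N, h]
  have hcol : ∀ j, ∑ i, (N i j : ℕ) = ∑ i, (M i j : ℕ) := by
    intro j
    refine Fintype.sum_eq_sum_of_eq_off_pair hi ?_ fun i h₁ h₂ => by simp [N, h₁, h₂]
    simp only [N, true_or, or_true, if_true]
    rcases eq_or_ne j j₁ with rfl | h₁
    · simp [hcol]
    rcases eq_or_ne j j₂ with rfl | h₂
    · simp [hcol]
    · rw [Equiv.swap_apply_of_ne_of_ne h₁ h₂]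
  have := congrFun (congrFun (hM N hrow hcol) i₁) j₁
  simp [N] at this
  exact hne this.symm

theorem sum_val_fin_two_eq_card {ι : Type*} (s : Finset ι) (f : ι → Fin 2) :
    ∑ x ∈ s, (f x : ℕ) = #{x ∈ s | f x = 1} := by
  rw [card_filter]
  refine sum_congr rfl fun x _ => ?_
  split_ifs with h <;> omega

def rowSum {q m n : ℕ} (M : Fin m → Fin n → Fin q) (i : Fin m) : ℕ := ∑ j, (M i j : ℕ)

def colSum {q m n : ℕ} (M : Fin m → Fin n → Fin q) (j : Fin n) : ℕ := ∑ i, (M i j : ℕ)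

theorem isLonesum_of_sign_pattern {m n : ℕ} (M : Fin m → Fin n → Fin 2) (u : Fin m → ℤ)
    (v : Fin n → ℤ) (hpos : ∀ i j, M i j = 1 → 0 < u i + v j)
    (hneg : ∀ i j, M i j = 0 → u i + v j < 0) : IsLonesum M := by
  intro N hrow hcol
  -- `∑ (M - N) (u + v)` vanishes as `M - N` has zero margins, while each term is nonnegative
  set D : Fin m → Fin n → ℤ := fun i j => ((M i j : ℕ) : ℤ) - ((N i j : ℕ) : ℤ)
  have hrowD : ∀ i, ∑ j, D i j = 0 := fun i => by
    simp only [D, sum_sub_distrib, ← Nat.cast_sum, hrow i, sub_self]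
  have hcolD : ∀ j, ∑ i, D i j = 0 := fun j => by
    simp only [D, sum_sub_distrib, ← Nat.cast_sum, hcol j, sub_self]
  have htotal : ∑ i, ∑ j, D i j * (u i + v j) = 0 := by
    simp only [mul_add, sum_add_distrib, ← sum_mul, hrowD, zero_mul, zero_add]
    rw [sum_comm]
    simp only [← sum_mul, hcolD, zero_mul, sum_const_zero]
  have hterm : ∀ i j, 0 ≤ D i j * (u i + v j) := by
    intro i j
    have hN := (N i j).isLt
    by_cases h : M i j = 1
    · exact mul_nonneg (by simp only [D, h]; omega) (hpos i j h).le
    · have h0 : M i j = 0 := by omega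
      exact mul_nonneg_of_nonpos_of_nonpos (by simp only [D, h0]; omega) (hneg i j h0).le
  have hzero : ∀ i j, D i j * (u i + v j) = 0 := by
    intro i j
    have hi := (sum_eq_zero_iff_of_nonneg fun i _ => sum_nonneg fun j _ => hterm i j).1 htotal i
      (mem_univ i)
    exact (sum_eq_zero_iff_of_nonneg fun j _ => hterm i j).1 hi j (mem_univ j)
  funext i j
  have hw : u i + v j ≠ 0 := by
    by_cases h : M i j = 1
    · exact (hpos i j h).ne'
    · exact (hneg i j (by omega)).ne
  have hD := (mul_eq_zero.1 (hzero i j)).resolve_right hw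
  simp only [D, sub_eq_zero, Nat.cast_inj] at hD
  exact Fin.ext hD.symm

def SwitchFree {m n : ℕ} (M : Fin m → Fin n → Fin 2) : Prop :=
  ∀ i i' j j', M i j = 1 → M i' j' = 1 → M i' j = 1 ∨ M i j' = 1

theorem switchFree_of_no_forbidden_submatrix {m n : ℕ} {M : Fin m → Fin n → Fin 2}
    (h : ∀ (i1 i2 : Fin m) (j1 j2 : Fin n), i1 < i2 → j1 < j2 →
      ¬((M i1 j1 = 1 ∧ M i1 j2 = 0 ∧ M i2 j1 = 0 ∧ M i2 j2 = 1) ∨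
        (M i1 j1 = 0 ∧ M i1 j2 = 1 ∧ M i2 j1 = 1 ∧ M i2 j2 = 0))) :
    SwitchFree M := by
  intro i i' j j' h₁ h₂
  by_contra! h₀
  obtain ⟨h₃, h₄⟩ : M i' j = 0 ∧ M i j' = 0 := by omega
  have hi : i ≠ i' := by rintro rfl; simp_all
  have hj : j ≠ j' := by rintro rfl; simp_all
  rcases hi.lt_or_gt with hi | hi <;> rcases hj.lt_or_gt with hj | hj <;>
    exact h _ _ _ _ hi hj (by simp [*])

namespace SwitchFree

variable {m n : ℕ} {M : Fin m → Fin n → Fin 2}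

theorem eq_one_of_rowSum_le (hM : SwitchFree M) {i i' : Fin m} (hr : rowSum M i ≤ rowSum M i')
    {j : Fin n} (hj : M i j = 1) : M i' j = 1 := by
  by_contra h
  have hsub : ({j' | M i' j' = 1} : Finset (Fin n)) ⊂ ({j' | M i j' = 1} : Finset (Fin n)) := by
    refine (ssubset_iff_of_subset fun j' hj' => ?_).2 ⟨j, by simpa using hj, by simpa using h⟩
    simp only [mem_filter, mem_univ, true_and] at hj' ⊢
    exact (hM i i' j j' hj hj').resolve_left h
  rw [rowSum, rowSum, sum_val_fin_two_eq_card, sum_val_fin_two_eq_card] at hr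
  exact (card_lt_card hsub).not_ge hr

theorem eq_one_iff (hM : SwitchFree M) (i : Fin m) (j : Fin n) :
    M i j = 1 ↔ #{i' | rowSum M i ≤ rowSum M i'} ≤ colSum M j := by
  rw [colSum, sum_val_fin_two_eq_card]
  constructor
  · intro h
    refine card_le_card fun i' hi' => ?_
    simp only [mem_filter, mem_univ, true_and] at hi' ⊢
    exact hM.eq_one_of_rowSum_le hi' h
  · intro hle
    by_contra h
    have hsub : ({i' | M i' j = 1} : Finset (Fin m)) ⊂
        ({i' | rowSum M i ≤ rowSum M i'} : Finset (Fin m)) := by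
      refine (ssubset_iff_of_subset fun i' hi' => ?_).2 ⟨i, by simp, by simpa using h⟩
      simp only [mem_filter, mem_univ, true_and] at hi' ⊢
      by_contra! hlt
      exact h (hM.eq_one_of_rowSum_le hlt.le hi')
    exact (card_lt_card hsub).not_ge hle

theorem isLonesum (hM : SwitchFree M) : IsLonesum M :=
  -- by `eq_one_iff`, the odd weight `2 (c j - g i) + 1` is positive exactly at the ones of `M`
  isLonesum_of_sign_pattern M (fun i => 1 - 2 * #{i' | rowSum M i ≤ rowSum M i'})
    (fun j => 2 * colSum M j)
    (fun i j h => by have := (hM.eq_one_iff i j).1 h; omega)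
    (fun i j h => by have := (hM.eq_one_iff i j).not.1 (by simp [h]); omega)

end SwitchFree

/-- A binary matrix is a lonesum matrix if and only if no `2×2` submatrix
equals `(1 0; 0 1)` or `(0 1; 1 0)`. -/
theorem binary_lonesum_iff_no_forbidden_submatrix (m n : ℕ) (M : Fin m → Fin n → Fin 2) :
    IsLonesum M ↔
      ∀ (i1 i2 : Fin m) (j1 j2 : Fin n), i1 < i2 → j1 < j2 →
        ¬((M i1 j1 = 1 ∧ M i1 j2 = 0 ∧ M i2 j1 = 0 ∧ M i2 j2 = 1) ∨
          (M i1 j1 = 0 ∧ M i1 j2 = 1 ∧ M i2 j1 = 1 ∧ M i2 j2 = 0)) := by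
  constructor
  · rintro hM i1 i2 j1 j2 hi - (⟨h₁₁, h₁₂, h₂₁, h₂₂⟩ | ⟨h₁₁, h₁₂, h₂₁, h₂₂⟩) <;>
      exact not_isLonesum_of_swap M (j₁ := j1) (j₂ := j2) hi.ne (by simp [*]) (by simp [*]) hM
  · exact fun h => (switchFree_of_no_forbidden_submatrix h).isLonesum
end

section
/- For all integers m, n ≥ 0, the number of binary lonesum m×n matrices equals Σ_{j=0}^{min(m,n)} (j!)² · S(m+1, j+1) · S(n+1, j+1). -/
/-- The Stirling number of the second kind `S(m, l)`. -/
def stirling : ℕ → ℕ → ℕ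
  | 0, 0 => 1
  | 0, _ + 1 => 0
  | _ + 1, 0 => 0
  | m + 1, l + 1 => (l + 1) * stirling m (l + 1) + stirling m l

open Finset Fintype

lemma stirling_eq_stirlingSecond : stirling = Nat.stirlingSecond := by
  funext m l
  induction m generalizing l with
  | zero => cases l <;> rfl
  | succ m ih => cases l <;> simp [stirling, Nat.stirlingSecond_succ_succ, ih]

section CoveringMaps

variable {ι β : Type*} [Fintype ι] [DecidableEq β]

lemma card_le_of_forall_exists_eq {t : Finset β} {f : ι → β} (h : ∀ b ∈ t, ∃ a, f a = b) :
    #t ≤ Fintype.card ι :=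
  calc #t ≤ #(univ.image f) := card_le_card fun b hb => by simpa using h b hb
    _ ≤ Fintype.card ι := card_image_le

variable [DecidableEq ι]

def coveringMaps (s t : Finset β) : Finset (ι → β) :=
  {f ∈ piFinset fun _ => s | ∀ b ∈ t, ∃ a, f a = b}

lemma mem_coveringMaps {s t : Finset β} {f : ι → β} :
    f ∈ coveringMaps s t ↔ (∀ a, f a ∈ s) ∧ ∀ b ∈ t, ∃ a, f a = b := by
  simp [coveringMaps]

end CoveringMaps

section Recurrence

variable {β : Type*} {m : ℕ} {s t : Finset β}

lemma head_mem_and_tail_ne {f : Fin (m + 1) → β} (hcov : ∀ x ∈ t, ∃ a, f a = x)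
    (hnot : ¬ ∀ x ∈ t, ∃ a, Fin.tail f a = x) : f 0 ∈ t ∧ ∀ a, Fin.tail f a ≠ f 0 := by
  push Not at hnot
  obtain ⟨x, hx, hmiss⟩ := hnot
  obtain ⟨a, rfl⟩ := hcov x hx
  cases a using Fin.cases with
  | zero => exact ⟨hx, hmiss⟩
  | succ a => exact absurd rfl (hmiss a)

variable [DecidableEq β]

lemma card_filter_coveringMaps_head_eq (hts : t ⊆ s) {b : β} (hb : b ∈ t) :
    #{f ∈ coveringMaps (ι := Fin (m + 1)) s t |
        ¬ (∀ x ∈ t, ∃ a, Fin.tail f a = x) ∧ f 0 = b} =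
      #(coveringMaps (ι := Fin m) (s.erase b) (t.erase b)) := by
  refine card_nbij' Fin.tail (fun g => (Fin.cons b g : Fin (m + 1) → β)) (fun f hf => ?_)
    (fun g hg => ?_) (fun f hf => ?_) (fun g _ => Fin.tail_cons _ _)
  · simp only [coe_filter, mem_coveringMaps, Set.mem_ofPred_eq] at hf
    obtain ⟨⟨hs, hcov⟩, hnot, rfl⟩ := hf
    have hhead := (head_mem_and_tail_ne hcov hnot).2
    simp only [mem_coe, mem_coveringMaps, mem_erase]
    refine ⟨fun a => ⟨hhead a, hs _⟩, fun x ⟨hx0, hx⟩ => ?_⟩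
    obtain ⟨a, rfl⟩ := hcov x hx
    cases a using Fin.cases with
    | zero => exact absurd rfl hx0
    | succ a => exact ⟨a, rfl⟩
  · simp only [mem_coe, mem_coveringMaps, mem_erase] at hg
    simp only [coe_filter, mem_coveringMaps, Set.mem_ofPred_eq, Fin.forall_fin_succ,
      Fin.exists_fin_succ, Fin.cons_zero, Fin.cons_succ, Fin.tail_cons]
    refine ⟨⟨⟨hts hb, fun a => (hg.1 a).2⟩, fun x hx => ?_⟩, fun h => ?_, trivial⟩
    · by_cases hxb : x = b
      · exact Or.inl hxb.symm
      · exact Or.inr (hg.2 x ⟨hxb, hx⟩)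
    · obtain ⟨a, ha⟩ := h b hb
      exact (hg.1 a).1 ha
  · simp only [coe_filter, Set.mem_ofPred_eq] at hf
    rw [← hf.2.2]; exact Fin.cons_self_tail f

lemma card_coveringMaps_succ (hts : t ⊆ s) :
    #(coveringMaps (ι := Fin (m + 1)) s t) =
      #s * #(coveringMaps (ι := Fin m) s t) +
        ∑ b ∈ t, #(coveringMaps (ι := Fin m) (s.erase b) (t.erase b)) := by
  rw [← card_filter_add_card_filter_not (p := fun f => ∀ x ∈ t, ∃ a, Fin.tail f a = x)]
  congr 1
  · have htail : {f ∈ coveringMaps (ι := Fin (m + 1)) s t | ∀ x ∈ t, ∃ a, Fin.tail f a = x} =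
        {f ∈ piFinset fun _ : Fin (m + 1) => s | ∀ x ∈ t, ∃ a, Fin.tail f a = x} := by
      ext f
      simp only [mem_filter, mem_coveringMaps, mem_piFinset]
      exact ⟨fun h => ⟨h.1.1, h.2⟩, fun h => ⟨⟨h.1, fun x hx =>
        (h.2 x hx).elim fun a ha => ⟨a.succ, ha⟩⟩, h.2⟩⟩
    rw [htail]
    convert card_consEquiv_filter_piFinset (fun _ => s)
      (fun g : Fin m → β => ∀ x ∈ t, ∃ a, g a = x) using 2
    congr 1
    ext g
    simp [coveringMaps, Fin.tail]
  · rw [card_eq_sum_card_fiberwise (f := fun f => f 0) (t := t) ?_]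
    · exact sum_congr rfl fun b hb => by
        rw [filter_filter]; exact card_filter_coveringMaps_head_eq hts hb
    · intro f hf
      simp only [coe_filter, mem_coveringMaps, Set.mem_ofPred_eq] at hf
      exact (head_mem_and_tail_ne hf.1.2 hf.2).1

theorem card_coveringMaps (hts : t ⊆ s) (hcard : #s = #t + 1) :
    #(coveringMaps (ι := Fin m) s t) = (#t).factorial * Nat.stirlingSecond (m + 1) (#t + 1) := by
  induction m generalizing s t with
  | zero =>
    rcases t.eq_empty_or_nonempty with rfl | ⟨b, hb⟩
    · simp [coveringMaps, Nat.stirlingSecond_self]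
    · have hempty : coveringMaps (ι := Fin 0) s t = ∅ :=
        eq_empty_of_forall_notMem fun f hf => by simpa using (mem_coveringMaps.1 hf).2 b hb
      rw [hempty, Nat.stirlingSecond_eq_zero_of_lt (by have := card_pos.2 ⟨b, hb⟩; omega)]
      simp
  | succ m ih =>
    rw [card_coveringMaps_succ hts, ih hts hcard, hcard]
    rcases t.eq_empty_or_nonempty with rfl | ht
    · simp [Nat.stirlingSecond_one_right]
    obtain ⟨T, hT⟩ := Nat.exists_eq_add_one_of_ne_zero ht.card_pos.ne'
    have herase : ∀ b ∈ t, #(coveringMaps (ι := Fin m) (s.erase b) (t.erase b)) =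
        T.factorial * Nat.stirlingSecond (m + 1) (T + 1) := by
      intro b hb
      have hcard' : #(t.erase b) = T := by rw [card_erase_of_mem hb, hT]; rfl
      rw [ih (erase_subset_erase b hts) (by rw [card_erase_of_mem (hts hb), hcard, hcard']; omega),
        hcard']
    rw [sum_congr rfl herase, sum_const, smul_eq_mul, hT,
      Nat.stirlingSecond_succ_succ (m + 1) (T + 1), Nat.factorial_succ]
    ring

end Recurrence

lemma card_coveringMaps_range_Icc (m j : ℕ) :
    #(coveringMaps (ι := Fin m) (range (j + 1)) (Icc 1 j)) =
      j.factorial * stirling (m + 1) (j + 1) := by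
  have hsub : Icc 1 j ⊆ range (j + 1) := fun k hk => by
    rw [mem_Icc] at hk; rw [mem_range]; omega
  rw [card_coveringMaps hsub (by simp), Nat.card_Icc, stirling_eq_stirlingSecond]
  simp

section Chain

variable {κ : Type*} [DecidableEq κ]

def chainRank (𝒜 : Finset (Finset κ)) (R : Finset κ) : ℕ := #{A ∈ 𝒜 | A ⊆ R}

def chainDepth (𝒜 : Finset (Finset κ)) (c : κ) : ℕ := #{A ∈ 𝒜 | c ∈ A}

lemma chainRank_mono (𝒜 : Finset (Finset κ)) {R R' : Finset κ} (h : R ⊆ R') :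
    chainRank 𝒜 R ≤ chainRank 𝒜 R' :=
  card_le_card fun A hA => by
    rw [mem_filter] at hA ⊢
    exact ⟨hA.1, hA.2.trans h⟩

lemma chainRank_le_card (𝒜 : Finset (Finset κ)) (R : Finset κ) : chainRank 𝒜 R ≤ #𝒜 :=
  card_filter_le _ _

lemma chainDepth_le_card (𝒜 : Finset (Finset κ)) (c : κ) : chainDepth 𝒜 c ≤ #𝒜 :=
  card_filter_le _ _

/-- Inclusion–exclusion: when `c ∈ R` the two filters cover `𝒜` and share `R`; otherwise
they are disjoint. -/
theorem mem_iff_card_lt_chainRank_add_chainDepth {𝒜 : Finset (Finset κ)} {R : Finset κ}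
    (htotal : ∀ A ∈ 𝒜, A ⊆ R ∨ R ⊆ A) (hR : R.Nonempty → R ∈ 𝒜) (c : κ) :
    c ∈ R ↔ #𝒜 < chainRank 𝒜 R + chainDepth 𝒜 c := by
  rw [chainRank, chainDepth, ← card_union_add_card_inter, ← filter_or, ← filter_and]
  constructor
  · intro hc
    have hunion : {A ∈ 𝒜 | A ⊆ R ∨ c ∈ A} = 𝒜 :=
      filter_true_of_mem fun A hA => (htotal A hA).imp_right fun h => h hc
    have hinter : 0 < #{A ∈ 𝒜 | A ⊆ R ∧ c ∈ A} :=
      card_pos.2 ⟨R, mem_filter.2 ⟨hR ⟨c, hc⟩, subset_rfl, hc⟩⟩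
    rw [hunion]
    omega
  · intro hlt
    by_contra hc
    have hinter : {A ∈ 𝒜 | A ⊆ R ∧ c ∈ A} = ∅ :=
      filter_false_of_mem fun A _ h => hc (h.1 h.2)
    have := card_filter_le 𝒜 fun A => A ⊆ R ∨ c ∈ A
    rw [hinter, Finset.card_empty] at hlt
    omega

theorem image_chainRank {𝒜 : Finset (Finset κ)} (h𝒜 : IsChain (· ⊆ ·) (𝒜 : Set (Finset κ))) :
    𝒜.image (chainRank 𝒜) = Icc 1 #𝒜 := by
  have hinj : Set.InjOn (chainRank 𝒜) 𝒜 := by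
    intro A hA B hB hAB
    by_contra hne
    wlog hsub : A ⊂ B generalizing A B
    · exact this hB hA hAB.symm (Ne.symm hne)
        (((h𝒜.total hA hB).resolve_left fun h => hsub (h.ssubset_of_ne hne)).ssubset_of_ne
          (Ne.symm hne))
    refine (card_lt_card ⟨fun C hC => ?_, fun hBA => ?_⟩).ne hAB
    · rw [mem_filter] at hC ⊢
      exact ⟨hC.1, hC.2.trans hsub.subset⟩
    · exact hsub.not_subset (mem_filter.1 (hBA (mem_filter.2 ⟨hB, subset_rfl⟩))).2
  refine eq_of_subset_of_card_le (fun k hk => ?_) ?_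
  · obtain ⟨A, hA, rfl⟩ := mem_image.1 hk
    exact mem_Icc.2 ⟨card_pos.2 ⟨A, mem_filter.2 ⟨hA, subset_rfl⟩⟩, chainRank_le_card 𝒜 A⟩
  · rw [Nat.card_Icc, card_image_of_injOn hinj]
    omega

end Chain

section Weight

variable {ι κ : Type*} [Fintype ι] [Fintype κ]

lemma sum_sum_mul_add_eq_zero {d : ι → κ → ℤ} (hrow : ∀ a, ∑ b, d a b = 0)
    (hcol : ∀ b, ∑ a, d a b = 0) (x : ι → ℤ) (y : κ → ℤ) :
    ∑ a, ∑ b, d a b * (x a + y b) = 0 := by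
  simp only [mul_add, sum_add_distrib, ← sum_mul, hrow, zero_mul, zero_add]
  rw [sum_comm]
  simp [← sum_mul, hcol]

end Weight

section Matrix

variable {m n : ℕ}

def rowSet (M : Fin m → Fin n → Fin 2) (i : Fin m) : Finset (Fin n) := {c | M i c = 1}

/-- Swapping the two rows inside the columns `c, c'` of a `2 × 2` identity pattern permutes
every row and every column, so it keeps all line sums. -/
theorem IsLonesum.isChain_range_rowSet {M : Fin m → Fin n → Fin 2} (hM : IsLonesum M) :
    IsChain (· ⊆ ·) (Set.range (rowSet M)) := by
  rintro _ ⟨i, rfl⟩ _ ⟨i', rfl⟩ -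
  by_contra hnot
  push Not at hnot
  obtain ⟨c, hic, hi'c⟩ := not_subset.1 hnot.1
  obtain ⟨c', hi'c', hic'⟩ := not_subset.1 hnot.2
  have hzero : ∀ x : Fin 2, x ≠ 1 → x = 0 := by decide
  simp only [rowSet, mem_filter, mem_univ, true_and] at hic hi'c hi'c' hic'
  have hii' : i ≠ i' := by rintro rfl; exact hi'c hic
  have hcc' : c ≠ c' := by rintro rfl; exact hic' hic
  replace hi'c := hzero _ hi'c
  replace hic' := hzero _ hic'
  set N : Fin m → Fin n → Fin 2 := fun a b =>
    if b = c ∨ b = c' then M (Equiv.swap i i' a) b else M a b with hN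
  have hrow : ∀ a, ∃ σ : Equiv.Perm (Fin n), ∀ b, N a b = M a (σ b) := by
    intro a
    refine ⟨if a = i ∨ a = i' then Equiv.swap c c' else 1, fun b => ?_⟩
    split_ifs with ha
    · rcases ha with rfl | rfl <;> by_cases hb : b = c <;> by_cases hb' : b = c' <;>
        simp [Equiv.swap_apply_of_ne_of_ne, *]
    · push Not at ha
      simp [hN, Equiv.swap_apply_of_ne_of_ne ha.1 ha.2]
  have hcol : ∀ b, ∃ τ : Equiv.Perm (Fin m), ∀ a, N a b = M (τ a) b := fun b =>
    ⟨if b = c ∨ b = c' then Equiv.swap i i' else 1, fun a => by split_ifs <;> simp [*]⟩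
  have hNM := hM N (fun a => ?_) (fun b => ?_)
  · have := congrFun (congrFun hNM i) c
    simp [hN, hi'c, hic] at this
  · obtain ⟨σ, hσ⟩ := hrow a
    simp_rw [hσ]
    exact Equiv.sum_comp σ fun b => (M a b : ℕ)
  · obtain ⟨τ, hτ⟩ := hcol b
    simp_rw [hτ]
    exact Equiv.sum_comp τ fun a => (M a b : ℕ)

def thresholdMatrix (j : ℕ) (f : Fin m → ℕ) (g : Fin n → ℕ) : Fin m → Fin n → Fin 2 :=
  fun i c => if j < f i + g c then 1 else 0

/-- With the odd weights `2 (f i + g c) - 2 j - 1`, every entry of `M - N` has the sign of its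
weight, while the weighted sum of `M - N` vanishes because `M` and `N` share their line sums. -/
theorem isLonesum_thresholdMatrix (j : ℕ) (f : Fin m → ℕ) (g : Fin n → ℕ) :
    IsLonesum (thresholdMatrix j f g) := by
  intro N hrow hcol
  set M := thresholdMatrix j f g
  set d : Fin m → Fin n → ℤ := fun a b => ((M a b : ℕ) : ℤ) - ((N a b : ℕ) : ℤ)
  have hsum := sum_sum_mul_add_eq_zero (d := d) (fun a => ?_) (fun b => ?_)
    (fun a => 2 * (f a : ℤ) - (2 * j + 1)) (fun b => 2 * (g b : ℤ))
  · have hterm : ∀ a b, 0 ≤ d a b * (2 * (f a : ℤ) - (2 * j + 1) + 2 * (g b : ℤ)) := by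
      intro a b
      have hN := (N a b).isLt
      simp only [d, M, thresholdMatrix]
      split_ifs with h <;> simp <;> nlinarith
    funext a b
    have := (sum_eq_zero_iff_of_nonneg fun a _ => sum_nonneg fun b _ => hterm a b).1 hsum a
      (mem_univ a)
    have := (sum_eq_zero_iff_of_nonneg fun b _ => hterm a b).1 this b (mem_univ b)
    rcases mul_eq_zero.1 this with h | h
    · exact Fin.ext (by simp [d] at h; omega)
    · omega
  · simp only [d, sum_sub_distrib, ← Nat.cast_sum, hrow a, sub_self]
  · simp only [d, sum_sub_distrib, ← Nat.cast_sum, hcol b, sub_self]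

end Matrix

section Canonical

variable {m n : ℕ} {M : Fin m → Fin n → Fin 2}

def rowChain (M : Fin m → Fin n → Fin 2) : Finset (Finset (Fin n)) :=
  (univ.image (rowSet M)).erase ∅

def rowRank (M : Fin m → Fin n → Fin 2) (i : Fin m) : ℕ := chainRank (rowChain M) (rowSet M i)

def colDepth (M : Fin m → Fin n → Fin 2) (c : Fin n) : ℕ := chainDepth (rowChain M) c

lemma mem_rowChain {A : Finset (Fin n)} : A ∈ rowChain M ↔ A ≠ ∅ ∧ ∃ i, rowSet M i = A := by
  simp [rowChain]

lemma mem_rowSet_iff (h : IsChain (· ⊆ ·) (Set.range (rowSet M))) (i : Fin m) (c : Fin n) :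
    c ∈ rowSet M i ↔ #(rowChain M) < rowRank M i + colDepth M c := by
  refine mem_iff_card_lt_chainRank_add_chainDepth (fun A hA => ?_) (fun hne => ?_) c
  · obtain ⟨-, i', rfl⟩ := mem_rowChain.1 hA
    exact h.total ⟨i', rfl⟩ ⟨i, rfl⟩
  · exact mem_rowChain.2 ⟨hne.ne_empty, i, rfl⟩

theorem eq_thresholdMatrix_of_isChain (h : IsChain (· ⊆ ·) (Set.range (rowSet M))) :
    M = thresholdMatrix #(rowChain M) (rowRank M) (colDepth M) := by
  funext i c
  have hmem := mem_rowSet_iff h i c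
  simp only [rowSet, mem_filter, mem_univ, true_and] at hmem
  unfold thresholdMatrix
  split_ifs with hlt
  · exact hmem.2 hlt
  · have : M i c ≠ 1 := fun h1 => hlt (hmem.1 h1)
    omega

lemma rowRank_mem_coveringMaps (h : IsChain (· ⊆ ·) (Set.range (rowSet M))) :
    rowRank M ∈ coveringMaps (range (#(rowChain M) + 1)) (Icc 1 #(rowChain M)) := by
  refine mem_coveringMaps.2 ⟨fun i => mem_range.2 (Nat.lt_succ_of_le (chainRank_le_card _ _)),
    fun k hk => ?_⟩
  have hchain : IsChain (· ⊆ ·) (rowChain M : Set (Finset (Fin n))) :=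
    h.mono fun A hA => (mem_rowChain.1 hA).2
  rw [← image_chainRank hchain] at hk
  obtain ⟨A, hA, rfl⟩ := mem_image.1 hk
  obtain ⟨-, i, rfl⟩ := mem_rowChain.1 hA
  exact ⟨i, rfl⟩

/-- A column lying in the row of rank `j + 1 - k` but not in the row of rank `j - k` has
depth `k`. -/
lemma colDepth_mem_coveringMaps (h : IsChain (· ⊆ ·) (Set.range (rowSet M))) :
    colDepth M ∈ coveringMaps (range (#(rowChain M) + 1)) (Icc 1 #(rowChain M)) := by
  set j := #(rowChain M)
  have hdepth : ∀ c, colDepth M c ≤ j := chainDepth_le_card _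
  refine mem_coveringMaps.2 ⟨fun c => mem_range.2 (Nat.lt_succ_of_le (hdepth c)), fun k hk => ?_⟩
  have hrank := (mem_coveringMaps.1 (rowRank_mem_coveringMaps h)).2
  rw [mem_Icc] at hk
  obtain ⟨i, hi⟩ := hrank (j + 1 - k) (mem_Icc.2 ⟨by omega, by omega⟩)
  rcases eq_or_lt_of_le hk.2 with rfl | hkj
  · have hpos : 0 < #{A ∈ rowChain M | A ⊆ rowSet M i} := by
      change 0 < rowRank M i
      omega
    obtain ⟨A, hA⟩ := card_pos.1 hpos
    rw [mem_filter] at hA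
    obtain ⟨c, hc⟩ := nonempty_iff_ne_empty.2 (mem_rowChain.1 hA.1).1
    have := (mem_rowSet_iff h i c).1 (hA.2 hc)
    exact ⟨c, by have := hdepth c; omega⟩
  · obtain ⟨i', hi'⟩ := hrank (j - k) (mem_Icc.2 ⟨by omega, by omega⟩)
    have hnsub : ¬ rowSet M i ⊆ rowSet M i' := fun hsub => by
      have := chainRank_mono (rowChain M) hsub
      simp only [rowRank] at hi hi'
      omega
    obtain ⟨c, hc, hc'⟩ := not_subset.1 hnsub
    rw [mem_rowSet_iff h] at hc hc'
    exact ⟨c, by omega⟩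

end Canonical

section Recovery

variable {m n j : ℕ} {f : Fin m → ℕ} {g : Fin n → ℕ}

def thresholdRow (j : ℕ) (g : Fin n → ℕ) (k : ℕ) : Finset (Fin n) := {c | j < k + g c}

lemma rowSet_thresholdMatrix (i : Fin m) :
    rowSet (thresholdMatrix j f g) i = thresholdRow j g (f i) := by
  ext c
  simp [rowSet, thresholdRow, thresholdMatrix]

lemma le_of_mem_coveringMaps_range {ι : Type*} [Fintype ι] [DecidableEq ι] {f : ι → ℕ}
    (hf : f ∈ coveringMaps (range (j + 1)) (Icc 1 j)) (a : ι) : f a ≤ j :=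
  Nat.lt_succ_iff.1 (mem_range.1 ((mem_coveringMaps.1 hf).1 a))

lemma thresholdRow_subset_iff (hg : g ∈ coveringMaps (range (j + 1)) (Icc 1 j)) {k k' : ℕ}
    (hk : k ≤ j) : thresholdRow j g k ⊆ thresholdRow j g k' ↔ k ≤ k' := by
  refine ⟨fun hsub => ?_, fun hkk' c hc => ?_⟩
  · by_contra hlt
    obtain ⟨c, hc⟩ := (mem_coveringMaps.1 hg).2 (j - k') (mem_Icc.2 ⟨by omega, by omega⟩)
    have := @hsub c
    simp [thresholdRow] at this
    omega
  · simp only [thresholdRow, mem_filter, mem_univ, true_and] at hc ⊢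
    omega

lemma thresholdRow_eq_empty_iff (hg : g ∈ coveringMaps (range (j + 1)) (Icc 1 j)) {k : ℕ}
    (hk : k ≤ j) : thresholdRow j g k = ∅ ↔ k = 0 := by
  have hzero : thresholdRow j g 0 = ∅ :=
    filter_false_of_mem fun c _ => by have := le_of_mem_coveringMaps_range hg c; omega
  rw [← subset_empty, ← hzero, thresholdRow_subset_iff hg hk]
  omega

lemma injOn_thresholdRow (hg : g ∈ coveringMaps (range (j + 1)) (Icc 1 j)) :
    Set.InjOn (thresholdRow j g) (Icc 1 j : Finset ℕ) := fun k hk k' hk' hkk' => by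
  simp only [coe_Icc, Set.mem_Icc] at hk hk'
  have h1 := (thresholdRow_subset_iff hg hk.2).1 hkk'.subset
  have h2 := (thresholdRow_subset_iff hg hk'.2).1 hkk'.symm.subset
  omega

lemma rowChain_thresholdMatrix (hf : f ∈ coveringMaps (range (j + 1)) (Icc 1 j))
    (hg : g ∈ coveringMaps (range (j + 1)) (Icc 1 j)) :
    rowChain (thresholdMatrix j f g) = (Icc 1 j).image (thresholdRow j g) := by
  ext A
  simp only [mem_rowChain, rowSet_thresholdMatrix, mem_image, mem_Icc]
  constructor
  · rintro ⟨hA, i, rfl⟩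
    have := le_of_mem_coveringMaps_range hf i
    have := (thresholdRow_eq_empty_iff hg this).not.1 hA
    exact ⟨f i, ⟨by omega, by omega⟩, rfl⟩
  · rintro ⟨k, hk, rfl⟩
    obtain ⟨i, rfl⟩ := (mem_coveringMaps.1 hf).2 k (mem_Icc.2 hk)
    exact ⟨(thresholdRow_eq_empty_iff hg hk.2).not.2 (by omega), i, rfl⟩

lemma card_rowChain_thresholdMatrix (hf : f ∈ coveringMaps (range (j + 1)) (Icc 1 j))
    (hg : g ∈ coveringMaps (range (j + 1)) (Icc 1 j)) :
    #(rowChain (thresholdMatrix j f g)) = j := by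
  rw [rowChain_thresholdMatrix hf hg, card_image_of_injOn (injOn_thresholdRow hg), Nat.card_Icc]
  omega

lemma rowRank_thresholdMatrix (hf : f ∈ coveringMaps (range (j + 1)) (Icc 1 j))
    (hg : g ∈ coveringMaps (range (j + 1)) (Icc 1 j)) :
    rowRank (thresholdMatrix j f g) = f := by
  funext i
  have hfi := le_of_mem_coveringMaps_range hf i
  have hfilter : {k ∈ Icc 1 j | thresholdRow j g k ⊆ thresholdRow j g (f i)} = Icc 1 (f i) := by
    ext k
    simp only [mem_filter, mem_Icc]
    exact ⟨fun ⟨⟨h1, h2⟩, hsub⟩ => ⟨h1, (thresholdRow_subset_iff hg h2).1 hsub⟩,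
      fun ⟨h1, h2⟩ => ⟨⟨h1, h2.trans hfi⟩, (thresholdRow_subset_iff hg (h2.trans hfi)).2 h2⟩⟩
  rw [rowRank, chainRank, rowChain_thresholdMatrix hf hg, rowSet_thresholdMatrix, filter_image,
    card_image_of_injOn ((injOn_thresholdRow hg).mono (filter_subset _ _)), hfilter,
    Nat.card_Icc]
  omega

lemma colDepth_thresholdMatrix (hf : f ∈ coveringMaps (range (j + 1)) (Icc 1 j))
    (hg : g ∈ coveringMaps (range (j + 1)) (Icc 1 j)) :
    colDepth (thresholdMatrix j f g) = g := by
  funext c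
  have hgc := le_of_mem_coveringMaps_range hg c
  have hfilter : {k ∈ Icc 1 j | c ∈ thresholdRow j g k} = Icc (j + 1 - g c) j := by
    ext k
    simp only [thresholdRow, mem_filter, mem_Icc, mem_univ, true_and]
    omega
  rw [colDepth, chainDepth, rowChain_thresholdMatrix hf hg, filter_image,
    card_image_of_injOn ((injOn_thresholdRow hg).mono (filter_subset _ _)), hfilter,
    Nat.card_Icc]
  omega

end Recovery

section Count

variable {m n : ℕ}

def thresholdTriples (m n : ℕ) : Finset (Σ _ : ℕ, (Fin m → ℕ) × (Fin n → ℕ)) :=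
  (range (min m n + 1)).sigma fun j =>
    coveringMaps (range (j + 1)) (Icc 1 j) ×ˢ coveringMaps (range (j + 1)) (Icc 1 j)

lemma card_thresholdTriples (m n : ℕ) :
    #(thresholdTriples m n) = ∑ j ∈ range (min m n + 1),
      j.factorial ^ 2 * stirling (m + 1) (j + 1) * stirling (n + 1) (j + 1) := by
  rw [thresholdTriples, card_sigma]
  refine sum_congr rfl fun j _ => ?_
  rw [card_product, card_coveringMaps_range_Icc, card_coveringMaps_range_Icc]
  ring

lemma isLonesum_iff_mem_image_thresholdTriples {M : Fin m → Fin n → Fin 2} :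
    IsLonesum M ↔ M ∈ (thresholdTriples m n).image fun x => thresholdMatrix x.1 x.2.1 x.2.2 := by
  simp only [mem_image, thresholdTriples, mem_sigma, mem_product, mem_range]
  constructor
  · intro hM
    have h := hM.isChain_range_rowSet
    have hrank := rowRank_mem_coveringMaps h
    have hdepth := colDepth_mem_coveringMaps h
    have hm := card_le_of_forall_exists_eq (mem_coveringMaps.1 hrank).2
    have hn := card_le_of_forall_exists_eq (mem_coveringMaps.1 hdepth).2
    simp only [Nat.card_Icc, Fintype.card_fin] at hm hn
    exact ⟨⟨#(rowChain M), rowRank M, colDepth M⟩,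
      ⟨Nat.lt_succ_of_le (le_min hm hn), hrank, hdepth⟩, (eq_thresholdMatrix_of_isChain h).symm⟩
  · rintro ⟨x, -, rfl⟩
    exact isLonesum_thresholdMatrix _ _ _

lemma injOn_thresholdTriples :
    Set.InjOn (fun x : Σ _ : ℕ, (Fin m → ℕ) × (Fin n → ℕ) => thresholdMatrix x.1 x.2.1 x.2.2)
      (thresholdTriples m n) := by
  rintro ⟨j, f, g⟩ hx ⟨j', f', g'⟩ hx' hxx'
  simp only [thresholdTriples, coe_sigma, Set.mem_sigma_iff, mem_coe, mem_product] at hx hx'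
  dsimp only at hxx'
  have hj : j = j' := by
    rw [← card_rowChain_thresholdMatrix hx.2.1 hx.2.2, hxx',
      card_rowChain_thresholdMatrix hx'.2.1 hx'.2.2]
  subst hj
  have hf : f = f' := by
    rw [← rowRank_thresholdMatrix hx.2.1 hx.2.2, hxx', rowRank_thresholdMatrix hx'.2.1 hx'.2.2]
  have hg : g = g' := by
    rw [← colDepth_thresholdMatrix hx.2.1 hx.2.2, hxx', colDepth_thresholdMatrix hx'.2.1 hx'.2.2]
  rw [hf, hg]

end Count

/-- The number of binary lonesum `m×n` matrices is
`Σ_{j=0}^{min(m,n)} (j!)² · S(m+1, j+1) · S(n+1, j+1)`. -/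
theorem card_binary_lonesum_eq_partition_sum (m n : ℕ) :
    Nat.card {M : Fin m → Fin n → Fin 2 // IsLonesum M} =
      ∑ j ∈ Finset.range (min m n + 1),
        j.factorial ^ 2 * stirling (m + 1) (j + 1) * stirling (n + 1) (j + 1) := by
  rw [Nat.card_congr (Equiv.subtypeEquivRight fun M => isLonesum_iff_mem_image_thresholdTriples),
    Nat.card_eq_finsetCard, card_image_of_injOn injOn_thresholdTriples, card_thresholdTriples]
end

section
/- A ternary (3-ary) matrix is a lonesum matrix if and only if each of its 2×2 submatrices is equivalent (up to permuting rows and permuting columns) to a matrix of one of the five forms (2, 2; c, d), (2, b; 2, d), (2, b; c, 0), (a, b; 0, 0), (a, 0; c, 0), where a, b, c, d range over {0, 1, 2}. -/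
/-- Two matrices are equivalent if one is obtained from the other by permuting
rows and permuting columns. -/
def EquivMat {q m n : ℕ} (M N : Fin m → Fin n → Fin q) : Prop :=
  ∃ (σ : Equiv.Perm (Fin m)) (τ : Equiv.Perm (Fin n)), ∀ i j, M i j = N (σ i) (τ j)

/-- `N` is one of the five ternary standard forms `(2, 2; c, d)`, `(2, b; 2, d)`,
`(2, b; c, 0)`, `(a, b; 0, 0)`, `(a, 0; c, 0)` with `a, b, c, d ∈ {0, 1, 2}`. -/
def IsStandardForm3 (N : Fin 2 → Fin 2 → Fin 3) : Prop :=
  ∃ a b c d : Fin 3,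
    N = ![![2, 2], ![c, d]] ∨
    N = ![![2, b], ![2, d]] ∨
    N = ![![2, b], ![c, 0]] ∨
    N = ![![a, b], ![0, 0]] ∨
    N = ![![a, 0], ![c, 0]]

def Shiftable (a b c d : Fin 3) : Prop :=
  a ≠ 2 ∧ b ≠ 0 ∧ c ≠ 0 ∧ d ≠ 2

lemma Shiftable.symm {a b c d : Fin 3} (h : Shiftable a b c d) : Shiftable d c b a :=
  ⟨h.2.2.2, h.2.2.1, h.2.1, h.1⟩

lemma exists_equivMat_iff {q m n : ℕ} (M : Fin m → Fin n → Fin q)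
    (P : (Fin m → Fin n → Fin q) → Prop) :
    (∃ N, P N ∧ EquivMat M N) ↔
      ∃ (σ : Equiv.Perm (Fin m)) (τ : Equiv.Perm (Fin n)), P fun i j => M (σ i) (τ j) := by
  constructor
  · rintro ⟨N, hN, σ, τ, hMN⟩
    refine ⟨σ.symm, τ.symm, ?_⟩
    convert hN using 1
    funext i j
    simp [hMN]
  · rintro ⟨σ, τ, h⟩
    exact ⟨_, h, σ.symm, τ.symm, fun i j => by simp⟩

lemma isStandardForm3_iff (N : Fin 2 → Fin 2 → Fin 3) :
    IsStandardForm3 N ↔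
      N 0 0 = 2 ∧ (N 0 1 = 2 ∨ N 1 0 = 2 ∨ N 1 1 = 0) ∨
        N 1 0 = 0 ∧ N 1 1 = 0 ∨ N 0 1 = 0 ∧ N 1 1 = 0 := by
  constructor
  · rintro ⟨a, b, c, d, rfl | rfl | rfl | rfl | rfl⟩ <;> simp
  · intro h
    refine ⟨N 0 0, N 0 1, N 1 0, N 1 1, ?_⟩
    simp only [funext_iff, Fin.forall_fin_two, Matrix.cons_val_zero, Matrix.cons_val_one,
      Matrix.cons_val_fin_one, and_true, true_and]
    tauto

lemma exists_standardForm_equivMat_iff (a b c d : Fin 3) :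
    (∃ N, IsStandardForm3 N ∧ EquivMat ![![a, b], ![c, d]] N) ↔
      ¬Shiftable a b c d ∧ ¬Shiftable b a d c := by
  simp only [exists_equivMat_iff, isStandardForm3_iff, Shiftable]
  revert a b c d
  decide

lemma not_isLonesum_of_add {q m n : ℕ} {M : Fin m → Fin n → Fin q} (E : Fin m → Fin n → ℤ)
    (hrow : ∀ i, ∑ j, E i j = 0) (hcol : ∀ j, ∑ i, E i j = 0) (hE : E ≠ 0)
    (hrange : ∀ i j, 0 ≤ (M i j : ℤ) + E i j ∧ (M i j : ℤ) + E i j < q) :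
    ¬IsLonesum M := by
  intro hM
  let N : Fin m → Fin n → Fin q := fun i j =>
    ⟨((M i j : ℤ) + E i j).toNat, by have := hrange i j; omega⟩
  have hN (i j) : ((N i j : ℕ) : ℤ) = M i j + E i j := Int.toNat_of_nonneg (hrange i j).1
  have hNM : N = M := hM N
    (fun i => by zify; simp only [hN, Finset.sum_add_distrib, hrow, add_zero])
    (fun j => by zify; simp only [hN, Finset.sum_add_distrib, hcol, add_zero])
  refine hE (funext fun i => funext fun j => ?_)
  simpa [hNM] using hN i j

lemma not_isLonesum_of_shift {q m n : ℕ} {M : Fin m → Fin n → Fin q} {i i' : Fin m}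
    {j j' : Fin n} (hi : i ≠ i') (hj : j ≠ j') (hij : (M i j : ℕ) + 1 < q)
    (hij' : 0 < (M i j' : ℕ)) (hi'j : 0 < (M i' j : ℕ)) (hi'j' : (M i' j' : ℕ) + 1 < q) :
    ¬IsLonesum M := by
  let u : Fin m → ℤ := Pi.single i 1 - Pi.single i' 1
  let v : Fin n → ℤ := Pi.single j 1 - Pi.single j' 1
  have hu : ∑ k, u k = 0 := by simp [u]
  have hv : ∑ l, v l = 0 := by simp [v]
  refine not_isLonesum_of_add (fun k l => u k * v l)
    (fun k => by rw [← Finset.mul_sum, hv, mul_zero])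
    (fun l => by rw [← Finset.sum_mul, hu, zero_mul]) (fun h => ?_) (fun k l => ?_)
  · have := congrFun (congrFun h i) j
    simp [u, v, hi, hj] at this
  · simp only [u, v, Pi.sub_apply, Pi.single_apply]
    split_ifs <;> subst_vars <;> omega

lemma not_shiftable_of_isLonesum {m n : ℕ} {M : Fin m → Fin n → Fin 3} (hM : IsLonesum M)
    {i i' : Fin m} {j j' : Fin n} (hi : i ≠ i') (hj : j ≠ j') :
    ¬Shiftable (M i j) (M i j') (M i' j) (M i' j') := fun ⟨h₁, h₂, h₃, h₄⟩ =>
  not_isLonesum_of_shift hi hj (by omega) (by omega) (by omega) (by omega) hM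

lemma Fintype.exists_lt_of_sum_eq {ι M : Type*} [Fintype ι] [AddCommMonoid M] [LinearOrder M]
    [IsOrderedCancelAddMonoid M] {f g : ι → M}
    (h : ∑ x, f x = ∑ x, g x) {x : ι} (hx : f x < g x) : ∃ y, g y < f y := by
  by_contra! hle
  exact hx.ne ((Finset.sum_eq_sum_iff_of_le fun y _ => hle y).1 h x (Finset.mem_univ x))

lemma exists_alternating_walk {q m n : ℕ} {M N : Fin m → Fin n → Fin q}
    (hrow : ∀ i, ∑ j, (N i j : ℕ) = ∑ j, (M i j : ℕ))
    (hcol : ∀ j, ∑ i, (N i j : ℕ) = ∑ i, (M i j : ℕ)) (hNM : N ≠ M) :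
    ∃ (I : ℕ → Fin m) (J : ℕ → Fin n),
      (∀ k, M (I k) (J k) < N (I k) (J k)) ∧ ∀ k, N (I k) (J (k + 1)) < M (I k) (J (k + 1)) := by
  have row_step (i j) (h : M i j < N i j) : ∃ j', N i j' < M i j' :=
    Fintype.exists_lt_of_sum_eq (f := fun j => (M i j : ℕ)) (hrow i).symm h
  have col_step (i j) (h : N i j < M i j) : ∃ i', M i' j < N i' j :=
    Fintype.exists_lt_of_sum_eq (f := fun i => (N i j : ℕ)) (hcol j) h
  let Up := {p : Fin m × Fin n // M p.1 p.2 < N p.1 p.2}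
  have step (p : Up) : ∃ p' : Up, N p.1.1 p'.1.2 < M p.1.1 p'.1.2 := by
    obtain ⟨j', hj'⟩ := row_step _ _ p.2
    obtain ⟨i', hi'⟩ := col_step _ _ hj'
    exact ⟨⟨(i', j'), hi'⟩, hj'⟩
  obtain ⟨p₀⟩ : Nonempty Up := by
    obtain ⟨i, j, hij⟩ : ∃ i j, N i j ≠ M i j := by simpa [funext_iff] using hNM
    rcases hij.lt_or_gt with h | h
    · obtain ⟨i', h'⟩ := col_step i j h
      exact ⟨⟨(i', j), h'⟩⟩
    · exact ⟨⟨(i, j), h⟩⟩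
  choose next hnext using step
  refine ⟨fun k => (next^[k] p₀).1.1, fun k => (next^[k] p₀).1.2, fun k => (next^[k] p₀).2,
    fun k => ?_⟩
  simpa only [Function.iterate_succ_apply'] using hnext (next^[k] p₀)

lemma alternating_walk_zero_and_col_ne {m n : ℕ} {M N : Fin m → Fin n → Fin 3}
    (hM : ∀ i i' j j', i ≠ i' → j ≠ j' → ¬Shiftable (M i j) (M i j') (M i' j) (M i' j'))
    {I : ℕ → Fin m} {J : ℕ → Fin n} (hP : ∀ k, M (I k) (J k) < N (I k) (J k))
    (hQ : ∀ k, N (I k) (J (k + 1)) < M (I k) (J (k + 1))) (s r : ℕ) :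
    M (I (s + r + 1)) (J s) = 0 ∧ J (s + r + 1) ≠ J s := by
  have rows_ne (k) : I k ≠ I (k + 1) := fun h => by
    have := hP (k + 1)
    rw [← h] at this
    exact (hQ k).asymm this
  have step (k) (hk : M (I k) (J s) ≠ 2) (hJ : J (k + 1) ≠ J s) : M (I (k + 1)) (J s) = 0 := by
    by_contra h₀
    exact hM _ _ _ _ (rows_ne k) hJ.symm
      ⟨hk, by have := hQ k; omega, h₀, by have := hP (k + 1); omega⟩
  induction r with
  | zero =>
    have hJ : J (s + 1) ≠ J s := fun h => by
      have := hQ s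
      rw [h] at this
      exact (hP s).asymm this
    exact ⟨step s (by have := hP s; omega) hJ, hJ⟩
  | succ r ih =>
    have hJ : J (s + r + 1 + 1) ≠ J s := fun h => by
      have := hQ (s + r + 1)
      rw [h, ih.1] at this
      exact (Fin.zero_le _).not_gt this
    exact ⟨step (s + r + 1) (by rw [ih.1]; decide) hJ, hJ⟩

lemma isLonesum_of_forall_not_shiftable {m n : ℕ} {M : Fin m → Fin n → Fin 3}
    (hM : ∀ i i' j j', i ≠ i' → j ≠ j' → ¬Shiftable (M i j) (M i j') (M i' j) (M i' j')) :
    IsLonesum M := by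
  intro N hrow hcol
  by_contra hNM
  obtain ⟨I, J, hP, hQ⟩ := exists_alternating_walk hrow hcol hNM
  obtain ⟨s, t, hst, hJ⟩ := Finite.exists_ne_map_eq_of_infinite J
  rcases hst.lt_or_gt with h | h
  · obtain ⟨r, rfl⟩ := Nat.exists_eq_add_of_lt h
    exact (alternating_walk_zero_and_col_ne hM hP hQ s r).2 hJ.symm
  · obtain ⟨r, rfl⟩ := Nat.exists_eq_add_of_lt h
    exact (alternating_walk_zero_and_col_ne hM hP hQ t r).2 hJ

theorem isLonesum_iff_forall_not_shiftable {m n : ℕ} (M : Fin m → Fin n → Fin 3) :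
    IsLonesum M ↔
      ∀ i i' j j', i ≠ i' → j ≠ j' → ¬Shiftable (M i j) (M i j') (M i' j) (M i' j') :=
  ⟨fun hM _ _ _ _ => not_shiftable_of_isLonesum hM, isLonesum_of_forall_not_shiftable⟩

/-- A ternary matrix is a lonesum matrix if and only if each of its `2×2`
submatrices is equivalent to one of the five standard forms. -/
theorem ternary_lonesum_iff_submatrices (m n : ℕ) (M : Fin m → Fin n → Fin 3) :
    IsLonesum M ↔
      ∀ (i1 i2 : Fin m) (j1 j2 : Fin n), i1 < i2 → j1 < j2 →
        ∃ N : Fin 2 → Fin 2 → Fin 3, IsStandardForm3 N ∧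
          EquivMat ![![M i1 j1, M i1 j2], ![M i2 j1, M i2 j2]] N := by
  simp only [isLonesum_iff_forall_not_shiftable, exists_standardForm_equivMat_iff]
  constructor
  · intro h i1 i2 j1 j2 hi hj
    exact ⟨h _ _ _ _ hi.ne hj.ne, h _ _ _ _ hi.ne hj.ne'⟩
  · intro h i i' j j' hi hj
    rcases hi.lt_or_gt with hi | hi <;> rcases hj.lt_or_gt with hj | hj
    · exact (h i i' j j' hi hj).1
    · exact (h i i' j' j hi hj).2
    · exact fun hs => (h i' i j j' hi hj).2 hs.symm
    · exact fun hs => (h i' i j' j hi hj).1 hs.symm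
end

section
/- Let q ≥ 2. A q-ary m×n matrix M is a lonesum matrix if and only if every 2×2 submatrix of M is a lonesum matrix. Consequently, every minimal non-lonesum q-ary matrix (a non-lonesum matrix all of whose proper submatrices are lonesum) has size 2×2. -/
/-!
If `N ≠ M` have the same line sums, the sign pattern of `N - M` contains an infinite alternating
walk: positive entries `(r u, c u)` and negative entries `(r u, c (u + 1))`. Positive entries of
`N - M` sit where `M < q - 1` and negative ones where `0 < M`. If `M` has no interchange, the
entry of column `c a` is therefore `0` in every row the walk visits after step `a` until that
column recurs; but it recurs at a negative entry, where `M` is positive. Conversely, an interchange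
of `M` is an interchange of a `2×2` submatrix, which is then not lonesum, whereas submatrices of a
lonesum matrix are lonesum: a competitor of the submatrix extends by `M` to a competitor of `M`.
-/

open Finset Function

variable {α ι κ : Type*} {q : ℕ}

theorem injective_pair {a b : α} (h : a ≠ b) : Injective ![a, b] := by
  intro x y
  fin_cases x <;> fin_cases y <;> simp [h, h.symm]

theorem exists_lt_pair_eq [LinearOrder α] {x y : α} (h : x ≠ y) :
    ∃ x₁ x₂ : α, x₁ < x₂ ∧ ∃ a b : Fin 2, ![x₁, x₂] a = x ∧ ![x₁, x₂] b = y := by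
  rcases h.lt_or_gt with h | h
  exacts [⟨x, y, h, 0, 1, rfl, rfl⟩, ⟨y, x, h, 1, 0, rfl, rfl⟩]

theorem comp_pair_pair (M : ι → κ → α) (i₁ i₂ : ι) (j₁ j₂ : κ) :
    (fun a b => M (![i₁, i₂] a) (![j₁, j₂] b)) = ![![M i₁ j₁, M i₁ j₂], ![M i₂ j₁, M i₂ j₂]] := by
  funext a b
  fin_cases a <;> fin_cases b <;> rfl

theorem Finset.sum_eq_sum_of_eqOn_compl_range {M : Type*} [Fintype ι] [Fintype κ]
    [AddCommMonoid M] {c : ι → κ} (hc : Injective c) {f g : κ → M}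
    (hout : Set.EqOn f g (Set.range c)ᶜ) (hin : ∑ a, f (c a) = ∑ a, g (c a)) :
    ∑ j, f j = ∑ j, g j := by
  classical
  rw [← sum_add_sum_compl (univ.image c) f, ← sum_add_sum_compl (univ.image c) g,
    sum_image hc.injOn, sum_image hc.injOn, hin]
  congr 1
  exact sum_congr rfl fun j hj => hout (by simpa using hj)

/-- Adding `![![1, -1], ![-1, 1]]` on rows `i, i'` and columns `j, j'` keeps `M` `q`-ary
and preserves its line sums. -/
def HasInterchange (M : ι → κ → Fin q) : Prop :=
  ∃ i i' j j', i ≠ i' ∧ j ≠ j' ∧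
    (M i j : ℕ) + 1 < q ∧ 0 < (M i j' : ℕ) ∧ 0 < (M i' j : ℕ) ∧ (M i' j' : ℕ) + 1 < q

theorem not_isLonesum_two_by_two {a b c d : Fin q} (ha : (a : ℕ) + 1 < q) (hb : 0 < (b : ℕ))
    (hc : 0 < (c : ℕ)) (hd : (d : ℕ) + 1 < q) : ¬IsLonesum ![![a, b], ![c, d]] := by
  intro h
  have h₀₀ := congrFun₂ (h ![![⟨a + 1, ha⟩, ⟨b - 1, by omega⟩], ![⟨c - 1, by omega⟩, ⟨d + 1, hd⟩]]
    (fun i => by fin_cases i <;> simp [Fin.sum_univ_two] <;> omega)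
    (fun j => by fin_cases j <;> simp [Fin.sum_univ_two] <;> omega)) 0 0
  simpa using congrArg Fin.val h₀₀

theorem IsLonesum.comp_injective {m n k l : ℕ} {M : Fin m → Fin n → Fin q} (hM : IsLonesum M)
    {r : Fin k → Fin m} {c : Fin l → Fin n} (hr : Injective r) (hc : Injective c) :
    IsLonesum fun a b => M (r a) (c b) := by
  classical
  intro P hrow hcol
  set N : Fin m → Fin n → Fin q := extend r (fun a => extend c (P a) (M (r a))) M
  have hN_in : ∀ a b, N (r a) (c b) = P a b := by
    simp [N, hr.extend_apply, hc.extend_apply]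
  have hN_row : ∀ i ∉ Set.range r, N i = M i := fun i hi => extend_apply' _ _ _ hi
  have hN_col : ∀ i, ∀ j ∉ Set.range c, N i j = M i j := by
    intro i j hj
    by_cases hi : i ∈ Set.range r
    · obtain ⟨a, rfl⟩ := hi
      simp only [N, hr.extend_apply]
      exact extend_apply' _ _ _ hj
    · rw [hN_row i hi]
  have hNM : N = M := hM N (fun i => ?_) (fun j => ?_)
  · funext a b
    rw [← hN_in, hNM]
  · by_cases hi : i ∈ Set.range r
    · obtain ⟨a, rfl⟩ := hi
      exact sum_eq_sum_of_eqOn_compl_range hc (fun j hj => by rw [hN_col _ j hj])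
        (by simpa only [hN_in] using hrow a)
    · rw [hN_row i hi]
  · by_cases hj : j ∈ Set.range c
    · obtain ⟨b, rfl⟩ := hj
      exact sum_eq_sum_of_eqOn_compl_range hr (fun i hi => by rw [hN_row i hi])
        (by simpa only [hN_in] using hcol b)
    · simp only [hN_col _ j hj]

theorem IsLonesum.not_hasInterchange {m n : ℕ} {M : Fin m → Fin n → Fin q} (hM : IsLonesum M) :
    ¬HasInterchange M := by
  rintro ⟨i, i', j, j', hi, hj, h₁, h₂, h₃, h₄⟩
  have := hM.comp_injective (injective_pair hi) (injective_pair hj)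
  rw [comp_pair_pair] at this
  exact not_isLonesum_two_by_two h₁ h₂ h₃ h₄ this

theorem exists_alternating_walk_s11 [Fintype ι] [Fintype κ] {D : ι → κ → ℤ}
    (hrow : ∀ i, ∑ j, D i j = 0) (hcol : ∀ j, ∑ i, D i j = 0) (hD : D ≠ 0) :
    ∃ (r : ℕ → ι) (c : ℕ → κ), ∀ u, 0 < D (r u) (c u) ∧ D (r u) (c (u + 1)) < 0 := by
  have pos_in_col : ∀ i j, D i j ≠ 0 → ∃ i', 0 < D i' j := fun i j h => by
    simpa using exists_pos_of_sum_zero_of_exists_nonzero _ (hcol j) ⟨i, mem_univ _, h⟩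
  have neg_in_row : ∀ i j, D i j ≠ 0 → ∃ j', D i j' < 0 := fun i j h => by
    simpa using exists_pos_of_sum_zero_of_exists_nonzero (fun j => -D i j)
      (by simp [hrow i]) ⟨j, mem_univ _, neg_ne_zero.2 h⟩
  obtain ⟨i₀, j₀, h₀⟩ : ∃ i j, D i j ≠ 0 := by
    by_contra! h
    exact hD (funext₂ h)
  obtain ⟨i₁, h₁⟩ := pos_in_col i₀ j₀ h₀
  have step : ∀ p : {p : ι × κ // 0 < D p.1 p.2}, ∃ p' : {p : ι × κ // 0 < D p.1 p.2},
      D p.1.1 p'.1.2 < 0 := by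
    rintro ⟨⟨i, j⟩, hp⟩
    obtain ⟨j', hj'⟩ := neg_in_row i j hp.ne'
    obtain ⟨i', hi'⟩ := pos_in_col i j' hj'.ne
    exact ⟨⟨(i', j'), hi'⟩, hj'⟩
  choose g hg using step
  let p : ℕ → {p : ι × κ // 0 < D p.1 p.2} := fun u => g^[u] ⟨(i₁, j₀), h₁⟩
  refine ⟨fun u => (p u).1.1, fun u => (p u).1.2, fun u => ⟨(p u).2, ?_⟩⟩
  simp only [p, iterate_succ_apply']
  exact hg _

theorem not_alternating_walk [Finite κ] {M : ι → κ → Fin q} (hM : ¬HasInterchange M)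
    {D : ι → κ → ℤ} (hlo : ∀ i j, 0 < D i j → (M i j : ℕ) + 1 < q)
    (hhi : ∀ i j, D i j < 0 → 0 < (M i j : ℕ)) (r : ℕ → ι) (c : ℕ → κ)
    (hwalk : ∀ u, 0 < D (r u) (c u) ∧ D (r u) (c (u + 1)) < 0) : False := by
  have step : ∀ u j, c (u + 1) ≠ j → (M (r u) j : ℕ) + 1 < q → (M (r (u + 1)) j : ℕ) = 0 := by
    intro u j hj hj_low
    by_contra h0
    have hr : r (u + 1) ≠ r u := fun h => lt_asymm (hwalk u).2 (h ▸ (hwalk (u + 1)).1)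
    exact hM ⟨r (u + 1), r u, c (u + 1), j, hr, hj, hlo _ _ (hwalk (u + 1)).1,
      Nat.pos_of_ne_zero h0, hhi _ _ (hwalk u).2, hj_low⟩
  obtain ⟨a, hret⟩ : ∃ a d, 0 < d ∧ c (a + d) = c a := by
    obtain ⟨a, b, hab, hcab⟩ := Finite.exists_ne_map_eq_of_infinite c
    rcases hab.lt_or_gt with h | h
    · exact ⟨a, b - a, by omega, by rw [Nat.add_sub_cancel' h.le, hcab]⟩
    · exact ⟨b, a - b, by omega, by rw [Nat.add_sub_cancel' h.le, hcab]⟩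
  classical
  obtain ⟨d, ⟨hd, hcd⟩, hmin⟩ : ∃ d, (0 < d ∧ c (a + d) = c a) ∧
      ∀ v < d, ¬(0 < v ∧ c (a + v) = c a) :=
    ⟨Nat.find hret, Nat.find_spec hret, fun v => Nat.find_min hret⟩
  have hq : 1 < q := by have := hlo _ _ (hwalk 0).1; omega
  have hlow : ∀ s, s + 1 < d → (M (r (a + s)) (c a) : ℕ) + 1 < q := by
    intro s
    induction s with
    | zero => exact fun _ => hlo _ _ (hwalk a).1
    | succ s ih =>
      intro hs
      have := step (a + s) (c a) (fun h => hmin (s + 1) (by omega) ⟨by omega, h⟩) (ih (by omega))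
      rw [← add_assoc]
      omega
  obtain ⟨s, rfl⟩ : ∃ s, d = s + 2 := by
    have : d ≠ 1 := by
      rintro rfl
      exact lt_asymm (hwalk a).2 (by rw [hcd]; exact (hwalk a).1)
    exact ⟨d - 2, by omega⟩
  have := step (a + s) (c a) (fun h => hmin (s + 1) (by omega) ⟨by omega, h⟩) (hlow s (by omega))
  have := hhi _ _ (hwalk (a + s + 1)).2
  rw [show a + s + 1 + 1 = a + (s + 2) by omega, hcd] at this
  omega

theorem isLonesum_of_not_hasInterchange {m n : ℕ} {M : Fin m → Fin n → Fin q}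
    (hM : ¬HasInterchange M) : IsLonesum M := by
  intro N hrow hcol
  by_contra hNM
  let D : Fin m → Fin n → ℤ := fun i j => (N i j : ℕ) - (M i j : ℕ)
  have hD : D ≠ 0 := fun h => hNM (funext₂ fun i j => Fin.ext (by
    have := congrFun₂ h i j
    simp only [D, Pi.zero_apply, sub_eq_zero] at this
    exact_mod_cast this))
  obtain ⟨r, c, hwalk⟩ := exists_alternating_walk_s11 (D := D)
    (fun i => by simp [D, sum_sub_distrib, ← Nat.cast_sum, hrow i])
    (fun j => by simp [D, sum_sub_distrib, ← Nat.cast_sum, hcol j]) hD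
  refine not_alternating_walk hM (fun i j h => ?_) (fun i j h => ?_) r c hwalk
  · have := (N i j).isLt
    simp only [D] at h
    omega
  · simp only [D] at h
    omega

theorem isLonesum_iff_forall_two_by_two {m n : ℕ} {M : Fin m → Fin n → Fin q} :
    IsLonesum M ↔ ∀ (i₁ i₂ : Fin m) (j₁ j₂ : Fin n), i₁ < i₂ → j₁ < j₂ →
      IsLonesum ![![M i₁ j₁, M i₁ j₂], ![M i₂ j₁, M i₂ j₂]] := by
  refine ⟨fun hM i₁ i₂ j₁ j₂ hi hj => ?_, fun h => isLonesum_of_not_hasInterchange ?_⟩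
  · rw [← comp_pair_pair]
    exact hM.comp_injective (injective_pair hi.ne) (injective_pair hj.ne)
  · rintro ⟨i, i', j, j', hi, hj, h₁, h₂, h₃, h₄⟩
    obtain ⟨i₁, i₂, hi₁₂, a, a', rfl, rfl⟩ := exists_lt_pair_eq hi
    obtain ⟨j₁, j₂, hj₁₂, b, b', rfl, rfl⟩ := exists_lt_pair_eq hj
    have := h i₁ i₂ j₁ j₂ hi₁₂ hj₁₂
    rw [← comp_pair_pair] at this
    exact this.not_hasInterchange
      ⟨a, a', b, b', ne_of_apply_ne _ hi, ne_of_apply_ne _ hj, h₁, h₂, h₃, h₄⟩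

theorem eq_two_of_minimal_not_isLonesum {m n : ℕ} {M : Fin m → Fin n → Fin q}
    (hM : ¬IsLonesum M)
    (hmin : ∀ (k l : ℕ) (r : Fin k → Fin m) (c : Fin l → Fin n),
      StrictMono r → StrictMono c → (k < m ∨ l < n) → IsLonesum fun a b => M (r a) (c b)) :
    m = 2 ∧ n = 2 := by
  obtain ⟨i₁, i₂, j₁, j₂, hi, hj, hbad⟩ : ∃ (i₁ i₂ : Fin m) (j₁ j₂ : Fin n), i₁ < i₂ ∧ j₁ < j₂ ∧
      ¬IsLonesum fun a b => M (![i₁, i₂] a) (![j₁, j₂] b) := by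
    by_contra! h
    exact hM (isLonesum_iff_forall_two_by_two.2 fun i₁ i₂ j₁ j₂ hi hj =>
      comp_pair_pair M i₁ i₂ j₁ j₂ ▸ h i₁ i₂ j₁ j₂ hi hj)
  have : ¬(2 < m ∨ 2 < n) := fun h => hbad (hmin 2 2 _ _ (by simp [hi]) (by simp [hj]) h)
  have := i₂.isLt
  have := j₂.isLt
  have : (i₁ : ℕ) < i₂ := hi
  have : (j₁ : ℕ) < j₂ := hj
  omega

theorem qary_lonesum_iff_two_by_two_and_minimal_general (q : ℕ) :
    (∀ (m n : ℕ) (M : Fin m → Fin n → Fin q),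
      IsLonesum M ↔
        ∀ (i1 i2 : Fin m) (j1 j2 : Fin n), i1 < i2 → j1 < j2 →
          IsLonesum ![![M i1 j1, M i1 j2], ![M i2 j1, M i2 j2]])
    ∧
    (∀ (m n : ℕ) (M : Fin m → Fin n → Fin q),
      ¬ IsLonesum M →
      (∀ (k l : ℕ) (r : Fin k → Fin m) (c : Fin l → Fin n),
        StrictMono r → StrictMono c → (k < m ∨ l < n) →
        IsLonesum (fun a b => M (r a) (c b))) →
      m = 2 ∧ n = 2) :=
  ⟨fun _ _ _ => isLonesum_iff_forall_two_by_two, fun _ _ _ => eq_two_of_minimal_not_isLonesum⟩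

/-- For `q ≥ 2`: a `q`-ary matrix is lonesum iff all of its `2×2` submatrices are
lonesum; consequently every minimal non-lonesum `q`-ary matrix has size `2×2`. -/
theorem qary_lonesum_iff_two_by_two_and_minimal (q : ℕ) (hq : 2 ≤ q) :
    (∀ (m n : ℕ) (M : Fin m → Fin n → Fin q),
      IsLonesum M ↔
        ∀ (i1 i2 : Fin m) (j1 j2 : Fin n), i1 < i2 → j1 < j2 →
          IsLonesum ![![M i1 j1, M i1 j2], ![M i2 j1, M i2 j2]])
    ∧
    (∀ (m n : ℕ) (M : Fin m → Fin n → Fin q),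
      ¬ IsLonesum M →
      (∀ (k l : ℕ) (r : Fin k → Fin m) (c : Fin l → Fin n),
        StrictMono r → StrictMono c → (k < m ∨ l < n) →
        IsLonesum (fun a b => M (r a) (c b))) →
      m = 2 ∧ n = 2) :=
  qary_lonesum_iff_two_by_two_and_minimal_general q
end

section
/- For every integer n ≥ 3, let M^n be the 5-ary n×n matrix defined by: M^n_{i,i} = 0 for 1 ≤ i ≤ n; M^n_{i,i+1} = 1 for 1 ≤ i ≤ n−1; M^n_{n,1} = 1; M^n_{i,j} = 3 for all i, j with i ≤ j−2; M^n_{i,1} = 4 for 2 ≤ i ≤ n−1; and M^n_{i,j} = 2 for all i, j with 2 ≤ j < i ≤ n. Then M^n is not a weak lonesum matrix, while every proper submatrix of M^n is a weak lonesum matrix. -/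
/-- A `q`-ary `m×n` matrix `M` is a weak lonesum matrix if it is uniquely determined
by the structure vectors of its rows and columns (the structure vector of a vector
records, for each value `v`, the number of coordinates equal to `v`). -/
def IsWeakLonesum {q m n : ℕ} (M : Fin m → Fin n → Fin q) : Prop :=
  ∀ N : Fin m → Fin n → Fin q,
    (∀ (i : Fin m) (v : Fin q),
      (Finset.univ.filter fun j => N i j = v).card =
        (Finset.univ.filter fun j => M i j = v).card) →
    (∀ (j : Fin n) (v : Fin q),
      (Finset.univ.filter fun i => N i j = v).card =
        (Finset.univ.filter fun i => M i j = v).card) →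
    N = M

/-- The `5`-ary `n×n` matrix `M^n` (indices here are 0-based; the paper's
`M^n_{i,j}` for `1 ≤ i,j ≤ n` corresponds to our indices `i-1, j-1`):
`0` on the diagonal, `1` on the superdiagonal and in position `(n,1)`,
`3` above (where `i ≤ j − 2`), `4` in the rest of the first column, and
`2` elsewhere below the diagonal. -/
def Mmat (n : ℕ) : Fin n → Fin n → Fin 5 := fun i j =>
  if i = j then 0
  else if (i : ℕ) + 1 = (j : ℕ) then 1
  else if (i : ℕ) = n - 1 ∧ (j : ℕ) = 0 then 1
  else if (i : ℕ) + 2 ≤ (j : ℕ) then 3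
  else if (j : ℕ) = 0 then 4
  else 2

/-!
Every row and every column of `M^n` contains exactly one `0` and one `1`, so exchanging the
values `0` and `1` preserves all structure vectors, and `M^n` is not weak lonesum.

In a submatrix, the cells of value `3` are closed upwards in each column, those of value `2`
closed downwards, and those of value `4` lie in one column; such staircase patterns are determined
by their row and column counts. The cells of value `0` and `1` lie on the diagonal and on the
cyclic superdiagonal `j = i + 1 (mod n)`, and in `M^n` they form one cycle passing alternately
through rows and columns. Deleting a row or a column cuts this cycle, and starting from the cut the
counts of `0`s and `1`s in each row and column force the values one by one around it.
-/

open Finset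

section LineCounts
variable {ι α : Type*} [Fintype ι]

theorem iff_of_imp_of_card_filter_le {p q : ι → Prop} [DecidablePred p] [DecidablePred q]
    (h : ∀ i, p i → q i) (hcard : #{i | q i} ≤ #{i | p i}) (i : ι) : p i ↔ q i := by
  have hsub : ({i | p i} : Finset ι) ⊆ ({i | q i} : Finset ι) := fun i => by simpa using h i
  simpa using congrArg (i ∈ ·) (eq_of_subset_of_card_le hsub hcard)

theorem eq_of_forced_of_card_filter_eq [DecidableEq α] {x y : ι → α} {u w : α}
    (hcard : #{i | x i = w} = #{i | y i = w}) (hw : ∀ i, y i = w → x i = w)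
    {i : ι} (hi : y i ≠ w) (hxi : x i = u ∨ x i = w) : x i = u :=
  hxi.resolve_right fun h => hi ((iff_of_imp_of_card_filter_le hw hcard.le i).mpr h)

theorem card_filter_swap_apply_eq [DecidableEq α] (x : ι → α) {u w : α}
    (h : #{i | x i = u} = #{i | x i = w}) (v : α) :
    #{i | Equiv.swap u w (x i) = v} = #{i | x i = v} := by
  simp only [Equiv.swap_apply_eq_iff]
  rw [Equiv.swap_apply_def]
  split_ifs with hu hw
  · rw [hu, h]
  · rw [hw, h]
  · rfl

end LineCounts

section Staircase
variable {ι κ : Type*} [Fintype ι] [LinearOrder ι] [Fintype κ]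
  {P Q : ι → κ → Prop} [∀ a b, Decidable (P a b)] [∀ a b, Decidable (Q a b)]

theorem iff_of_antitone_of_card_filter_eq (hP : ∀ b, Antitone (P · b))
    (hrow : ∀ a, #{b | Q a b} = #{b | P a b}) (hcol : ∀ b, #{a | Q a b} = #{a | P a b})
    (a : ι) (b : κ) : Q a b ↔ P a b := by
  induction a using WellFoundedLT.induction generalizing b with
  | _ a ih =>
    have hQP : ∀ b, Q a b → P a b := by
      intro b hQ
      by_contra hPab
      -- column `b` of `P` lies strictly above row `a`, where `Q` already agrees with `P`
      have hssub : ({a' | P a' b} : Finset ι) ⊂ ({a' | Q a' b} : Finset ι) := by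
        refine (ssubset_iff_of_subset fun a' ha' => ?_).mpr
          ⟨a, by simpa using hQ, by simpa using hPab⟩
        simp only [mem_filter, mem_univ, true_and] at ha' ⊢
        exact (ih a' (lt_of_not_ge fun hle => hPab (hP b hle ha')) b).mpr ha'
      exact (card_lt_card hssub).ne' (hcol b)
    exact iff_of_imp_of_card_filter_le hQP (hrow a).ge b

theorem iff_of_monotone_of_card_filter_eq (hP : ∀ b, Monotone (P · b))
    (hrow : ∀ a, #{b | Q a b} = #{b | P a b}) (hcol : ∀ b, #{a | Q a b} = #{a | P a b})
    (a : ι) (b : κ) : Q a b ↔ P a b :=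
  iff_of_antitone_of_card_filter_eq (ι := ιᵒᵈ) (P := fun a b => P (OrderDual.ofDual a) b)
    (Q := fun a b => Q (OrderDual.ofDual a) b) (fun b => (hP b).dual_left) hrow hcol a b

end Staircase

theorem Equiv.Perm.IsCycle.forall_of_forall_imp_apply {α : Type*} [Finite α]
    {f : Equiv.Perm α} (hf : f.IsCycle) (hmoves : ∀ x, f x ≠ x) {p : α → Prop}
    (hstep : ∀ x, p x → p (f x)) {x₀ : α} (h₀ : p x₀) (x : α) : p x := by
  obtain ⟨i, rfl⟩ := hf.exists_pow_eq (hmoves x₀) (hmoves x)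
  induction i with
  | zero => exact h₀
  | succ i ih => rw [pow_succ', Equiv.Perm.mul_apply]; exact hstep _ ih

section Mmat
variable {n : ℕ}

theorem Mmat_eq_zero_iff {i j : Fin n} : Mmat n i j = 0 ↔ i = j := by
  unfold Mmat
  split_ifs <;> simp_all

theorem Mmat_eq_one_iff (hn : 2 ≤ n) {i j : Fin n} : Mmat n i j = 1 ↔ j = finRotate n i := by
  obtain ⟨m, rfl⟩ : ∃ m, n = m + 1 := ⟨n - 1, by omega⟩
  have hrot : (finRotate (m + 1) i : ℕ) = if (i : ℕ) = m then 0 else (i : ℕ) + 1 := by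
    simp only [coe_finRotate, Fin.ext_iff, Fin.val_last]
  rw [Fin.ext_iff (a := j), hrot]
  clear hrot
  have hj := j.isLt
  unfold Mmat
  split_ifs <;> simp only [Fin.ext_iff, Fin.isValue, true_iff] at * <;> omega

theorem monotone_Mmat_eq_two (j : Fin n) : Monotone (Mmat n · j = 2) := by
  intro i i' hii' h
  simp only [Mmat, Fin.ext_iff, Fin.le_def] at *
  split_ifs at h ⊢ <;> simp_all <;> omega

theorem antitone_Mmat_eq_three (j : Fin n) : Antitone (Mmat n · j = 3) := by
  intro i i' hii' h
  simp only [Mmat, Fin.ext_iff, Fin.le_def] at *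
  split_ifs at h ⊢ <;> simp_all <;> omega

theorem antitone_Mmat_eq_four (i : Fin n) : Antitone (Mmat n i · = 4) := by
  intro j j' hjj' h
  simp only [Mmat, Fin.ext_iff, Fin.le_def] at *
  split_ifs at h ⊢ <;> simp_all

end Mmat

theorem not_isWeakLonesum_of_card_filter_eq {q m k : ℕ} {M : Fin m → Fin k → Fin q}
    {u w : Fin q} (huw : u ≠ w) (hrow : ∀ i, #{j | M i j = u} = #{j | M i j = w})
    (hcol : ∀ j, #{i | M i j = u} = #{i | M i j = w}) {i : Fin m} {j : Fin k}
    (hij : M i j = u) : ¬ IsWeakLonesum M := fun hM => by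
  have hswap := hM (fun i j => Equiv.swap u w (M i j))
    (fun i => card_filter_swap_apply_eq _ (hrow i))
    (fun j => card_filter_swap_apply_eq _ (hcol j))
  have hentry := congrFun (congrFun hswap i) j
  simp only [hij, Equiv.swap_apply_left] at hentry
  exact huw hentry.symm

theorem not_isWeakLonesum_Mmat {n : ℕ} (hn : 2 ≤ n) : ¬ IsWeakLonesum (Mmat n) := by
  have h₀₀ : Mmat n ⟨0, by omega⟩ ⟨0, by omega⟩ = 0 := Mmat_eq_zero_iff.mpr rfl
  refine not_isWeakLonesum_of_card_filter_eq (w := 1) (by decide) (fun i => ?_) (fun j => ?_)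
    h₀₀
  · simp only [Mmat_eq_zero_iff, Mmat_eq_one_iff hn, filter_eq, filter_eq', mem_univ, if_true,
      card_singleton]
  · simp only [Mmat_eq_zero_iff, Mmat_eq_one_iff hn, ← Equiv.symm_apply_eq, filter_eq,
      filter_eq', mem_univ, if_true, card_singleton]

section Submatrix
variable {n k l : ℕ} {r : Fin k → Fin n} {c : Fin l → Fin n} {N : Fin k → Fin l → Fin 5}

theorem Mmat_submatrix_eq_one_of_diag (hn : 2 ≤ n)
    (hpair : ∀ a b,
      (N a b = 0 ∨ N a b = 1) ↔ (Mmat n (r a) (c b) = 0 ∨ Mmat n (r a) (c b) = 1))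
    (hrow : ∀ a, #{b | N a b = 0} = #{b | Mmat n (r a) (c b) = 0}) {t : Fin n}
    (hdiag : ∀ a b, r a = t → c b = t → N a b = 0) (a : Fin k) (b : Fin l) (hra : r a = t)
    (hcb : c b = finRotate n t) : N a b = 1 := by
  have hA : Mmat n (r a) (c b) = 1 := (Mmat_eq_one_iff hn).mpr (hra ▸ hcb)
  refine eq_of_forced_of_card_filter_eq (hrow a) (fun b' hb' => hdiag a b' hra ?_)
    (by rw [hA]; decide) ((hpair a b).mpr (.inr hA)).symm
  exact (Mmat_eq_zero_iff.mp hb').symm.trans hra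

theorem Mmat_submatrix_eq_zero_of_next (hn : 2 ≤ n)
    (hpair : ∀ a b,
      (N a b = 0 ∨ N a b = 1) ↔ (Mmat n (r a) (c b) = 0 ∨ Mmat n (r a) (c b) = 1))
    (hcol : ∀ b, #{a | N a b = 1} = #{a | Mmat n (r a) (c b) = 1}) {t : Fin n}
    (hnext : ∀ a b, r a = t → c b = finRotate n t → N a b = 1) (a : Fin k) (b : Fin l)
    (hra : r a = finRotate n t) (hcb : c b = finRotate n t) : N a b = 0 := by
  have hA : Mmat n (r a) (c b) = 0 := Mmat_eq_zero_iff.mpr (hra.trans hcb.symm)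
  refine eq_of_forced_of_card_filter_eq (hcol b) (fun a' ha' => hnext a' b ?_ hcb)
    (by rw [hA]; decide) ((hpair a b).mpr (.inl hA))
  exact (finRotate n).injective (((Mmat_eq_one_iff hn).mp ha').symm.trans hcb)

theorem isWeakLonesum_Mmat_submatrix (hn : 2 ≤ n) (hr : Monotone r) (hc : Monotone c)
    {t₀ : Fin n} (ht₀ : (∀ a, r a ≠ t₀) ∨ ∀ b, c b ≠ t₀) :
    IsWeakLonesum fun a b => Mmat n (r a) (c b) := by
  intro N hrow hcol
  have h2 : ∀ a b, N a b = 2 ↔ Mmat n (r a) (c b) = 2 := iff_of_monotone_of_card_filter_eq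
    (fun b => (monotone_Mmat_eq_two (c b)).comp hr) (hrow · 2) (hcol · 2)
  have h3 : ∀ a b, N a b = 3 ↔ Mmat n (r a) (c b) = 3 := iff_of_antitone_of_card_filter_eq
    (fun b => (antitone_Mmat_eq_three (c b)).comp_monotone hr) (hrow · 3) (hcol · 3)
  have h4 : ∀ a b, N a b = 4 ↔ Mmat n (r a) (c b) = 4 := fun a b =>
    iff_of_antitone_of_card_filter_eq (P := fun b a => Mmat n (r a) (c b) = 4)
      (Q := fun b a => N a b = 4) (fun a => (antitone_Mmat_eq_four (r a)).comp_monotone hc)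
      (hcol · 4) (hrow · 4) b a
  have hpair : ∀ a b,
      (N a b = 0 ∨ N a b = 1) ↔ (Mmat n (r a) (c b) = 0 ∨ Mmat n (r a) (c b) = 1) := by
    intro a b
    have hlow : ∀ v : Fin 5, (v = 0 ∨ v = 1) ↔ ¬(v = 2 ∨ v = 3 ∨ v = 4) := by decide
    rw [hlow, hlow, h2, h3, h4]
  have hdiag : ∀ t a b, r a = t → c b = t → N a b = 0 := by
    refine (isCycle_finRotate_of_le hn).forall_of_forall_imp_apply (fun t => ?_)
      (fun t ht => ?_) (x₀ := t₀) fun a b hra hcb =>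
        (ht₀.elim (fun h => h a hra) (fun h => h b hcb)).elim
    · exact Equiv.Perm.mem_support.mp (by simp [support_finRotate_of_le hn])
    · exact Mmat_submatrix_eq_zero_of_next hn hpair (hcol · 1)
        (Mmat_submatrix_eq_one_of_diag hn hpair (hrow · 0) ht)
  funext a b
  have hval : ∀ v : Fin 5, v = 0 ∨ v = 1 ∨ v = 2 ∨ v = 3 ∨ v = 4 := by decide
  rcases hval (Mmat n (r a) (c b)) with h | h | h | h | h <;> rw [h]
  · exact hdiag _ a b rfl (Mmat_eq_zero_iff.mp h).symm
  · exact Mmat_submatrix_eq_one_of_diag hn hpair (hrow · 0) (hdiag _) a b rfl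
      ((Mmat_eq_one_iff hn).mp h)
  · exact (h2 a b).mpr h
  · exact (h3 a b).mpr h
  · exact (h4 a b).mpr h

end Submatrix

/-- For `n ≥ 3`, the matrix `M^n` is not a weak lonesum matrix, while every proper
submatrix of `M^n` is a weak lonesum matrix. -/
theorem Mmat_not_weakLonesum_but_minimal (n : ℕ) (hn : 3 ≤ n) :
    ¬ IsWeakLonesum (Mmat n) ∧
      ∀ (k l : ℕ) (r : Fin k → Fin n) (c : Fin l → Fin n),
        StrictMono r → StrictMono c → (k < n ∨ l < n) →
        IsWeakLonesum (fun a b => Mmat n (r a) (c b)) := by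
  refine ⟨not_isWeakLonesum_Mmat (by omega), fun k l r c hr hc hkl => ?_⟩
  obtain ⟨t₀, ht₀⟩ : ∃ t₀, (∀ a, r a ≠ t₀) ∨ ∀ b, c b ≠ t₀ := by
    by_contra! hsurj
    have hk := Fintype.card_le_of_surjective r fun t => (hsurj t).1
    have hl := Fintype.card_le_of_surjective c fun t => (hsurj t).2
    simp only [Fintype.card_fin] at hk hl
    omega
  exact isWeakLonesum_Mmat_submatrix (by omega) hr.monotone hc.monotone ht₀
end

section
/- Let q ≥ 2. If a q-ary m×n matrix M contains a cycle, then M is not a weak lonesum matrix. -/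
/-- `p 0, p 1, …, p (k-1)` is a cycle of length `k` in `M`: the positions are
pairwise distinct; consecutive positions (cyclically, corresponding to the appended
sequence of length `k+2`) share a row or a column; no three consecutive positions
(cyclically) share a row, nor a column; and the entries along the extended sequence
of length `k+2` alternate between two distinct values `a, b`. -/
def IsCycle {q m n : ℕ} (M : Fin m → Fin n → Fin q) (k : ℕ) (p : ℕ → Fin m × Fin n) : Prop :=
  0 < k ∧
  (∀ l1 l2, l1 < k → l2 < k → p l1 = p l2 → l1 = l2) ∧
  (∀ l, l < k → ((p l).1 = (p ((l + 1) % k)).1 ∨ (p l).2 = (p ((l + 1) % k)).2)) ∧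
  (∀ l, l < k → ¬((p l).1 = (p ((l + 1) % k)).1 ∧ (p ((l + 1) % k)).1 = (p ((l + 2) % k)).1)) ∧
  (∀ l, l < k → ¬((p l).2 = (p ((l + 1) % k)).2 ∧ (p ((l + 1) % k)).2 = (p ((l + 2) % k)).2)) ∧
  (∃ a b : Fin q, a ≠ b ∧
    ∀ l, l < k + 2 → M (p (l % k)).1 (p (l % k)).2 = if Even l then a else b)

/-!
Along a cycle the entries alternate between two values `a ≠ b`, so shifting every entry of the
cycle one step forward changes the matrix. Since row steps and column steps alternate along the
cycle, the cycle positions on any line (row or column) split into pairs of neighbours carrying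
`a` and `b`; on that line the shift just transposes each pair, so it keeps the structure vectors
of all rows and columns.
-/

open Finset Function

theorem card_filter_comp_eq_of_involutive {ι α : Type*} [Fintype ι] [DecidableEq α]
    {σ : ι → ι} (hσ : Involutive σ) (f : ι → α) (v : α) :
    #{j | f (σ j) = v} = #{j | f j = v} :=
  card_equiv (hσ.toPerm σ) (by simp)

section Lines

variable {ι κ α : Type*} [DecidableEq α] {M N : ι → κ → α} {Φ : ι × κ → ι × κ}

theorem card_filter_row_eq_of_involutive [Fintype κ] (hΦ : Involutive Φ)
    (hfst : ∀ z, (Φ z).1 = z.1) (hN : ∀ i j, N i j = uncurry M (Φ (i, j))) (i : ι) (v : α) :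
    #{j | N i j = v} = #{j | M i j = v} := by
  have hΦi : ∀ j, Φ (i, j) = (i, (Φ (i, j)).2) := fun j => Prod.ext (hfst _) rfl
  have hσ : Involutive fun j => (Φ (i, j)).2 := fun j => by
    show (Φ (i, (Φ (i, j)).2)).2 = j
    rw [← hΦi, hΦ]
  simp only [hN]
  convert card_filter_comp_eq_of_involutive hσ (M i) v using 4 with j
  rw [hΦi]
  rfl

theorem card_filter_col_eq_of_involutive [Fintype ι] (hΦ : Involutive Φ)
    (hsnd : ∀ z, (Φ z).2 = z.2) (hN : ∀ i j, N i j = uncurry M (Φ (i, j))) (j : κ) (v : α) :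
    #{i | N i j = v} = #{i | M i j = v} := by
  have hΦj : ∀ i, Φ (i, j) = ((Φ (i, j)).1, j) := fun i => Prod.ext rfl (hsnd _)
  have hσ : Involutive fun i => (Φ (i, j)).1 := fun i => by
    show (Φ ((Φ (i, j)).1, j)).1 = i
    rw [← hΦj, hΦ]
  simp only [hN]
  convert card_filter_comp_eq_of_involutive hσ (fun i => M i j) v using 4 with i
  rw [hΦj]
  rfl

end Lines

theorem add_one_iff_not_of_forall_or {G : Type*} [Add G] [One G] {R C : G → Prop}
    (hRC : ∀ x, R x ∨ C x) (hR : ∀ x, ¬(R x ∧ R (x + 1))) (hC : ∀ x, ¬(C x ∧ C (x + 1)))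
    (x : G) : R (x + 1) ↔ ¬R x := by
  refine ⟨fun h hx => hR x ⟨hx, h⟩, fun hx => (hRC (x + 1)).resolve_right fun h => ?_⟩
  exact hC x ⟨(hRC x).resolve_left hx, h⟩

section CyclicShift

variable {G P ι α : Type*} [AddGroup G] [One G]

def alternatingPartner (S : G → Prop) [DecidablePred S] (x : G) : G :=
  if S x then x + 1 else x - 1

theorem alternatingPartner_involutive {S : G → Prop} [DecidablePred S]
    (hS : ∀ x, S (x + 1) ↔ ¬S x) : Involutive (alternatingPartner S) := by
  intro x
  by_cases hx : S x
  · have : ¬S (x + 1) := fun h => (hS x).mp h hx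
    simp [alternatingPartner, hx, this]
  · have : S (x - 1) := by simpa [hx] using hS (x - 1)
    simp [alternatingPartner, hx, this]

noncomputable def shiftAlong (c : G → P) (f : P → α) : P → α :=
  extend c (fun x => f (c (x + 1))) f

theorem shiftAlong_apply_self {c : G → P} (hc : Injective c) (f : P → α) (x : G) :
    shiftAlong c f (c x) = f (c (x + 1)) :=
  hc.extend_apply _ _ x

/-- `Φ` swaps each `c x` with whichever of `c (x + 1)`, `c (x - 1)` lies on the same line. -/
theorem exists_involutive_shiftAlong_eq_comp {c : G → P} (hc : Injective c) (L : P → ι)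
    (hL : ∀ x, L (c (x + 1)) = L (c (x + 1 + 1)) ↔ L (c x) ≠ L (c (x + 1)))
    (f : P → α) (hf : ∀ x, f (c (x + 1 + 1)) = f (c x)) :
    ∃ Φ : P → P, Involutive Φ ∧ (∀ z, L (Φ z) = L z) ∧
      ∀ z, shiftAlong c f z = f (Φ z) := by
  classical
  set S : G → Prop := fun x => L (c x) = L (c (x + 1))
  have hS : ∀ x, S (x + 1) ↔ ¬S x := hL
  have hline : ∀ x, L (c (alternatingPartner S x)) = L (c x) := by
    intro x
    by_cases hx : S x
    · simp only [alternatingPartner, hx, if_true]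
      exact hx.symm
    · have h : S (x - 1) := by simpa [hx] using hS (x - 1)
      simp only [alternatingPartner, hx, if_false]
      simpa [S] using h
  have hval : ∀ x, f (c (alternatingPartner S x)) = f (c (x + 1)) := by
    intro x
    by_cases hx : S x
    · simp only [alternatingPartner, hx, if_true]
    · simp only [alternatingPartner, hx, if_false]
      simpa using (hf (x - 1)).symm
  set Φ : P → P := extend c (fun x => c (alternatingPartner S x)) id
  have hΦc : ∀ x, Φ (c x) = c (alternatingPartner S x) := hc.extend_apply _ _
  have hΦ : ∀ z, (¬∃ x, c x = z) → Φ z = z := extend_apply' _ _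
  refine ⟨Φ, fun z => ?_, fun z => ?_, fun z => ?_⟩ <;> by_cases hz : ∃ x, c x = z
  · obtain ⟨x, rfl⟩ := hz
    rw [hΦc, hΦc, alternatingPartner_involutive hS]
  · rw [hΦ z hz, hΦ z hz]
  · obtain ⟨x, rfl⟩ := hz
    rw [hΦc, hline]
  · rw [hΦ z hz]
  · obtain ⟨x, rfl⟩ := hz
    rw [shiftAlong_apply_self hc, hΦc, hval]
  · rw [shiftAlong, extend_apply' _ _ _ hz, hΦ z hz]

end CyclicShift

theorem Fin.val_add_one_eq_mod {k : ℕ} [NeZero k] (x : Fin k) :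
    ((x + 1 : Fin k) : ℕ) = (x + 1) % k := by
  rw [Fin.val_add, Fin.val_one', Nat.add_mod_mod]

theorem Fin.val_add_one_add_one_eq_mod {k : ℕ} [NeZero k] (x : Fin k) :
    ((x + 1 + 1 : Fin k) : ℕ) = (x + 2) % k := by
  rw [Fin.val_add_one_eq_mod, Fin.val_add_one_eq_mod, Nat.mod_add_mod]

namespace IsCycle

variable {q m n k : ℕ} {M : Fin m → Fin n → Fin q} {p : ℕ → Fin m × Fin n}

theorem injective (hc : IsCycle M k p) : Injective fun x : Fin k => p x :=
  fun x y h => Fin.ext (hc.2.1 x y x.isLt y.isLt h)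

theorem fst_eq_or_snd_eq [NeZero k] (hc : IsCycle M k p) (x : Fin k) :
    (p x).1 = (p ↑(x + 1)).1 ∨ (p x).2 = (p ↑(x + 1)).2 := by
  rw [Fin.val_add_one_eq_mod]
  exact hc.2.2.1 x x.isLt

theorem not_fst_eq_fst_eq [NeZero k] (hc : IsCycle M k p) (x : Fin k) :
    ¬((p x).1 = (p ↑(x + 1)).1 ∧ (p ↑(x + 1)).1 = (p ↑(x + 1 + 1)).1) := by
  rw [Fin.val_add_one_add_one_eq_mod, Fin.val_add_one_eq_mod]
  exact hc.2.2.2.1 x x.isLt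

theorem not_snd_eq_snd_eq [NeZero k] (hc : IsCycle M k p) (x : Fin k) :
    ¬((p x).2 = (p ↑(x + 1)).2 ∧ (p ↑(x + 1)).2 = (p ↑(x + 1 + 1)).2) := by
  rw [Fin.val_add_one_add_one_eq_mod, Fin.val_add_one_eq_mod]
  exact hc.2.2.2.2.1 x x.isLt

theorem entry_add_one_add_one [NeZero k] (hc : IsCycle M k p) (x : Fin k) :
    uncurry M (p ↑(x + 1 + 1)) = uncurry M (p x) := by
  obtain ⟨a, b, -, hab⟩ := hc.2.2.2.2.2
  have h0 := hab x (by omega)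
  rw [Nat.mod_eq_of_lt x.isLt] at h0
  rw [Fin.val_add_one_add_one_eq_mod, uncurry_apply_pair, hab (x + 2) (by omega),
    uncurry_apply_pair, h0]
  simp [Nat.even_add]

theorem entry_add_one_ne [NeZero k] (hc : IsCycle M k p) (x : Fin k) :
    uncurry M (p ↑(x + 1)) ≠ uncurry M (p x) := by
  obtain ⟨a, b, hne, hab⟩ := hc.2.2.2.2.2
  have h0 := hab x (by omega)
  rw [Nat.mod_eq_of_lt x.isLt] at h0
  rw [Fin.val_add_one_eq_mod, uncurry_apply_pair, hab (x + 1) (by omega),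
    uncurry_apply_pair, h0]
  by_cases hx : Even (x : ℕ) <;> simp [Nat.even_add_one, hx, hne, hne.symm]

end IsCycle

theorem not_weakLonesum_of_cycle_general (q m n k : ℕ)
    (M : Fin m → Fin n → Fin q) (p : ℕ → Fin m × Fin n) (hc : IsCycle M k p) :
    ¬ IsWeakLonesum M := by
  have : NeZero k := ⟨hc.1.ne'⟩
  obtain ⟨Φr, hΦr, hrow, hNr⟩ := exists_involutive_shiftAlong_eq_comp hc.injective Prod.fst
    (add_one_iff_not_of_forall_or hc.fst_eq_or_snd_eq hc.not_fst_eq_fst_eq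
      hc.not_snd_eq_snd_eq) (uncurry M) hc.entry_add_one_add_one
  obtain ⟨Φc, hΦc, hcol, hNc⟩ := exists_involutive_shiftAlong_eq_comp hc.injective Prod.snd
    (add_one_iff_not_of_forall_or (fun x => (hc.fst_eq_or_snd_eq x).symm) hc.not_snd_eq_snd_eq
      hc.not_fst_eq_fst_eq) (uncurry M) hc.entry_add_one_add_one
  intro hw
  have hNM : curry (shiftAlong (fun x : Fin k => p x) (uncurry M)) = M :=
    hw _ (card_filter_row_eq_of_involutive hΦr hrow fun i j => hNr (i, j))
      (card_filter_col_eq_of_involutive hΦc hcol fun i j => hNc (i, j))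
  apply hc.entry_add_one_ne 0
  rw [← shiftAlong_apply_self hc.injective (uncurry M), ← uncurry_curry (shiftAlong _ _), hNM]

/-- For `q ≥ 2`, a `q`-ary matrix containing a cycle is not a weak lonesum matrix. -/
theorem not_weakLonesum_of_cycle (q m n k : ℕ) (hq : 2 ≤ q)
    (M : Fin m → Fin n → Fin q) (p : ℕ → Fin m × Fin n) (hc : IsCycle M k p) :
    ¬ IsWeakLonesum M :=
  not_weakLonesum_of_cycle_general q m n k M p hc
end
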